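/- arXiv:math/0506256 — 13 statements merged into one kernel-verified Lean document; each statement's English description precedes it below -/
import Mathlib

section
/- For all probability distributions P = (p_1,...,p_n) and Q = (q_1,...,q_n) with all p_i, q_i > 0 and ∑p_i = ∑q_i = 1, the J-divergence decomposes as J(P||Q) = 4[I(P||Q) + T(P||Q)], where J(P||Q) = ∑(p_i - q_i)ln(p_i/q_i), I(P||Q) = (1/2)∑[p_i ln(2p_i/(p_i+q_i)) + q_i ln(2q_i/(p_i+q_i))], and T(P||Q) = ∑((p_i+q_i)/2) ln((p_i+q_i)/(2√(p_i q_i))). -/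
open Finset Real

theorem stmt0 (n : ℕ) (p q : Fin n → ℝ)
    (hp : ∀ i, 0 < p i) (hq : ∀ i, 0 < q i)
    (hp1 : ∑ i, p i = 1) (hq1 : ∑ i, q i = 1) :
    ∑ i, (p i - q i) * Real.log (p i / q i) = 4 * ((((1:ℝ)/2) * ∑ i, (p i * Real.log (2 * p i / (p i + q i)) + q i * Real.log (2 * q i / (p i + q i)))) + (∑ i, ((p i + q i)/2) * Real.log ((p i + q i) / (2 * Real.sqrt (p i * q i))))) := by
  rw [Finset.mul_sum, ← Finset.sum_add_distrib, Finset.mul_sum]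
  apply Finset.sum_congr rfl
  intro i _
  have hpi := hp i
  have hqi := hq i
  have hs : 0 < p i + q i := by linarith
  have h2 : (0:ℝ) < 2 := by norm_num
  have hsq : 0 < Real.sqrt (p i * q i) := Real.sqrt_pos.mpr (by positivity)
  rw [Real.log_div hpi.ne' hqi.ne',
      Real.log_div (by positivity) hs.ne',
      Real.log_div (by positivity) hs.ne',
      Real.log_div hs.ne' (by positivity),
      Real.log_mul h2.ne' hpi.ne',
      Real.log_mul h2.ne' hqi.ne',
      Real.log_mul h2.ne' hsq.ne',
      Real.log_sqrt (by positivity),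
      Real.log_mul hpi.ne' hqi.ne']
  ring
end

section
/- Let f : (0,∞) → ℝ be differentiable, convex, and normalized with f(1) = 0. Then for all P, Q ∈ Γ_n, 0 ≤ ∑ q_i f(p_i/q_i) ≤ ∑ (p_i - q_i) f'(p_i/q_i). -/
open Finset Real

lemma pointwise_bound (f : ℝ → ℝ) (hdf : ∀ x ∈ Set.Ioi (0:ℝ), DifferentiableAt ℝ f x)
    (hcf : ConvexOn ℝ (Set.Ioi 0) f) (hf1 : f 1 = 0) {x : ℝ} (hx : 0 < x) :
    f x ≤ (x - 1) * deriv f x := by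
  rcases lt_trichotomy x 1 with h | h | h
  · have h1 := hcf.deriv_le_slope hx (by norm_num : (1:ℝ) ∈ Set.Ioi 0) h (hdf x hx)
    rw [slope_def_field, hf1] at h1
    have h2 := (le_div_iff₀ (by linarith : (0:ℝ) < 1 - x)).mp h1
    nlinarith [h2]
  · simp [h, hf1]
  · have h1 := hcf.slope_le_deriv (by norm_num : (1:ℝ) ∈ Set.Ioi 0) hx h (hdf x hx)
    rw [slope_def_field, hf1] at h1
    have h2 := (div_le_iff₀ (by linarith : (0:ℝ) < x - 1)).mp h1
    nlinarith [h2]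

theorem stmt3 (f : ℝ → ℝ) (hdf : ∀ x ∈ Set.Ioi (0:ℝ), DifferentiableAt ℝ f x)
    (hcf : ConvexOn ℝ (Set.Ioi 0) f) (hf1 : f 1 = 0)
    (n : ℕ) (p q : Fin n → ℝ)
    (hp : ∀ i, 0 < p i) (hq : ∀ i, 0 < q i)
    (hp1 : ∑ i, p i = 1) (hq1 : ∑ i, q i = 1) :
    0 ≤ ∑ i, q i * f (p i / q i) ∧
      ∑ i, q i * f (p i / q i) ≤ ∑ i, (p i - q i) * deriv f (p i / q i) := by
  constructor
  · have h := hcf.map_sum_le (t := Finset.univ) (w := q) (p := fun i => p i / q i)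
      (fun i _ => (hq i).le) hq1 (fun i _ => div_pos (hp i) (hq i))
    have : ∑ i, q i • (p i / q i) = 1 := by
      rw [← hp1]; congr 1; ext i
      rw [smul_eq_mul, mul_comm, div_mul_cancel₀ _ (hq i).ne']
    rw [this, hf1] at h
    simpa using h
  · apply Finset.sum_le_sum
    intro i _
    have hx : 0 < p i / q i := div_pos (hp i) (hq i)
    have hb := pointwise_bound f hdf hcf hf1 hx
    have := mul_le_mul_of_nonneg_left hb (hq i).le
    have key : q i * (p i / q i - 1) = p i - q i := by
      rw [mul_sub, mul_one, mul_comm, div_mul_cancel₀ _ (hq i).ne']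
    calc q i * f (p i / q i) ≤ q i * ((p i / q i - 1) * deriv f (p i / q i)) := this
      _ = q i * (p i / q i - 1) * deriv f (p i / q i) := by ring
      _ = (p i - q i) * deriv f (p i / q i) := by rw [key]
end

section
/- Let f : (0,∞) → ℝ be differentiable, convex with f(1) = 0, and let P, Q ∈ Γ_n satisfy 0 < r ≤ p_i/q_i ≤ R < ∞ for all i with r ≤ 1 ≤ R and r ≠ R. Then 0 ≤ ∑ q_i f(p_i/q_i) ≤ ((R-1)f(r) + (1-r)f(R))/(R-r). -/
open Finset Real

/-!
The lower bound is Jensen's inequality: the `q`-weighted mean of the ratios `p i / q i` is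
`∑ p i = 1`, so `C_f(P‖Q) ≥ f 1 = 0`. For the upper bound, on `[r, R]` a convex function lies below
its chord through `(r, f r)` and `(R, f R)`; the chord is affine, so averaging it against `q`
evaluates it at the mean ratio `1`.
-/

section Chord

variable {𝕜 : Type*} [Field 𝕜] [LinearOrder 𝕜] [IsStrictOrderedRing 𝕜] {s : Set 𝕜} {f : 𝕜 → 𝕜}
  {a b : 𝕜}

theorem ConvexOn.le_chord (hf : ConvexOn 𝕜 s f) (ha : a ∈ s) (hb : b ∈ s) (hab : a < b) {x : 𝕜}
    (hax : a ≤ x) (hxb : x ≤ b) : f x ≤ ((b - x) * f a + (x - a) * f b) / (b - a) := by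
  have hba : 0 < b - a := sub_pos.2 hab
  have hcomb : (b - x) / (b - a) * a + (x - a) / (b - a) * b = x := by field
  have h := hf.2 ha hb (div_nonneg (sub_nonneg.2 hxb) hba.le)
    (div_nonneg (sub_nonneg.2 hax) hba.le) (by field)
  simp only [smul_eq_mul, hcomb] at h
  calc f x ≤ (b - x) / (b - a) * f a + (x - a) / (b - a) * f b := h
    _ = ((b - x) * f a + (x - a) * f b) / (b - a) := by ring

theorem ConvexOn.sum_mul_le_chord {ι : Type*} {t : Finset ι} {w x : ι → 𝕜}
    (hf : ConvexOn 𝕜 s f) (ha : a ∈ s) (hb : b ∈ s) (hab : a < b) (hw : ∀ i ∈ t, 0 ≤ w i)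
    (hw1 : ∑ i ∈ t, w i = 1) (hx : ∀ i ∈ t, a ≤ x i ∧ x i ≤ b) :
    ∑ i ∈ t, w i * f (x i) ≤
      ((b - ∑ i ∈ t, w i * x i) * f a + (∑ i ∈ t, w i * x i - a) * f b) / (b - a) := by
  have hchord_mean : ∑ i ∈ t, w i * (((b - x i) * f a + (x i - a) * f b) / (b - a)) =
      ((b * ∑ i ∈ t, w i - ∑ i ∈ t, w i * x i) * f a +
        (∑ i ∈ t, w i * x i - a * ∑ i ∈ t, w i) * f b) / (b - a) := by
    simp only [Finset.mul_sum, Finset.sum_mul, Finset.sum_div, ← Finset.sum_sub_distrib,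
      ← Finset.sum_add_distrib]
    exact Finset.sum_congr rfl fun i _ => by ring
  calc ∑ i ∈ t, w i * f (x i)
      ≤ ∑ i ∈ t, w i * (((b - x i) * f a + (x i - a) * f b) / (b - a)) :=
        Finset.sum_le_sum fun i hi =>
          mul_le_mul_of_nonneg_left (hf.le_chord ha hb hab (hx i hi).1 (hx i hi).2) (hw i hi)
    _ = _ := by rw [hchord_mean, hw1, mul_one, mul_one]

end Chord

theorem stmt4_general (f : ℝ → ℝ)
    (hcf : ConvexOn ℝ (Set.Ioi 0) f) (hf1 : f 1 = 0)
    (n : ℕ) (p q : Fin n → ℝ)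
    (hq : ∀ i, 0 < q i)
    (hp1 : ∑ i, p i = 1) (hq1 : ∑ i, q i = 1)
    (r R : ℝ) (hr : 0 < r) (hr1 : r ≤ 1) (h1R : 1 ≤ R) (hne : r ≠ R)
    (hrR : ∀ i, r ≤ p i / q i ∧ p i / q i ≤ R) :
    0 ≤ ∑ i, q i * f (p i / q i) ∧
      ∑ i, q i * f (p i / q i) ≤ ((R - 1) * f r + (1 - r) * f R) / (R - r) := by
  have hrR' : r < R := lt_of_le_of_ne (hr1.trans h1R) hne
  have hmean : ∑ i, q i * (p i / q i) = 1 := by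
    simpa only [mul_div_cancel₀ _ (hq _).ne'] using hp1
  constructor
  · have hjensen := hcf.map_sum_le (t := univ) (fun i _ => (hq i).le) hq1
      (fun i _ => hr.trans_le (hrR i).1)
    simpa only [smul_eq_mul, hmean, hf1] using hjensen
  · have hchord := hcf.sum_mul_le_chord hr (hr.trans hrR') hrR' (fun i _ => (hq i).le) hq1
      (fun i _ => hrR i)
    rwa [hmean] at hchord

theorem stmt4 (f : ℝ → ℝ) (hdf : ∀ x ∈ Set.Ioi (0:ℝ), DifferentiableAt ℝ f x)
    (hcf : ConvexOn ℝ (Set.Ioi 0) f) (hf1 : f 1 = 0)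
    (n : ℕ) (p q : Fin n → ℝ)
    (hp : ∀ i, 0 < p i) (hq : ∀ i, 0 < q i)
    (hp1 : ∑ i, p i = 1) (hq1 : ∑ i, q i = 1)
    (r R : ℝ) (hr : 0 < r) (hr1 : r ≤ 1) (h1R : 1 ≤ R) (hne : r ≠ R)
    (hrR : ∀ i, r ≤ p i / q i ∧ p i / q i ≤ R) :
    0 ≤ ∑ i, q i * f (p i / q i) ∧
      ∑ i, q i * f (p i / q i) ≤ ((R - 1) * f r + (1 - r) * f R) / (R - r) :=
  stmt4_general f hcf hf1 n p q hq hp1 hq1 r R hr hr1 h1R hne hrR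
end

section
/- Let f : (0,∞) → ℝ be differentiable convex with f(1) = 0 and let 0 < r ≤ 1 ≤ R < ∞, r ≠ R. Then ((R-1)f(r) + (1-r)f(R))/(R-r) ≤ (1/4)(R-r)(f'(R) - f'(r)). -/
open Finset Real

theorem stmt5 (f : ℝ → ℝ) (hdf : ∀ x ∈ Set.Ioi (0:ℝ), DifferentiableAt ℝ f x)
    (hcf : ConvexOn ℝ (Set.Ioi 0) f) (hf1 : f 1 = 0)
    (r R : ℝ) (hr : 0 < r) (hr1 : r ≤ 1) (h1R : 1 ≤ R) (hne : r ≠ R) :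
    ((R - 1) * f r + (1 - r) * f R) / (R - r) ≤
      (1/4) * (R - r) * (deriv f R - deriv f r) := by
  have hrR : r < R := lt_of_le_of_ne (hr1.trans h1R) hne
  have hrS : r ∈ Set.Ioi (0:ℝ) := hr
  have h1S : (1:ℝ) ∈ Set.Ioi (0:ℝ) := Set.mem_Ioi.mpr one_pos
  have hRS : R ∈ Set.Ioi (0:ℝ) := lt_of_lt_of_le one_pos h1R
  have hmono : deriv f r ≤ deriv f R := hcf.monotoneOn_deriv hdf hrS hRS hrR.le
  have hA : f r ≤ (r - 1) * deriv f r := by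
    rcases eq_or_lt_of_le hr1 with h | h
    · subst h; simp [hf1]
    · have hs := hcf.deriv_le_slope hrS h1S h (hdf r hrS)
      rw [slope_def_field, hf1] at hs
      have h2 : deriv f r * (1 - r) ≤ 0 - f r := (le_div_iff₀ (by linarith : (0:ℝ) < 1 - r)).mp hs
      nlinarith
  have hB : f R ≤ (R - 1) * deriv f R := by
    rcases eq_or_lt_of_le h1R with h | h
    · rw [← h]; simp [hf1]
    · have hs := hcf.slope_le_deriv h1S hRS h (hdf R hRS)
      rw [slope_def_field, hf1] at hs
      have h2 : f R - 0 ≤ deriv f R * (R - 1) := (div_le_iff₀ (by linarith : (0:ℝ) < R - 1)).mp hs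
      nlinarith
  rw [div_le_iff₀ (by linarith : (0:ℝ) < R - r)]
  nlinarith [mul_le_mul_of_nonneg_left hA (by linarith : (0:ℝ) ≤ R - 1),
    mul_le_mul_of_nonneg_left hB (by linarith : (0:ℝ) ≤ 1 - r),
    mul_nonneg (sq_nonneg (R + r - 2)) (sub_nonneg.mpr hmono)]
end

section
/- Let f₁, f₂ : (0,∞) → ℝ be twice differentiable on (r,R), convex, with f₁(1) = f₂(1) = 0, f₂''(x) > 0 on (r,R), and suppose m ≤ f₁''(x)/f₂''(x) ≤ M for all x ∈ (r,R). Then for all P, Q ∈ Γ_n with r < p_i/q_i < R for all i, m·∑q_i f₂(p_i/q_i) ≤ ∑q_i f₁(p_i/q_i) ≤ M·∑q_i f₂(p_i/q_i). -/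
/-! If `m ≤ f₁''/f₂'' ≤ M` with `f₂'' > 0`, then `f₁ - m f₂` and `M f₂ - f₁` have nonnegative second
derivative on `(r, R)`, hence are convex there, and both vanish at `1`. Jensen's inequality for the
weights `qᵢ` at the points `pᵢ/qᵢ`, whose barycentre is `∑ pᵢ = 1`, makes their Csiszár divergences
nonnegative, and the divergence is linear in the generating function. -/

open Finset Filter Topology

noncomputable def csiszarDiv {ι : Type*} [Fintype ι] (f : ℝ → ℝ) (p q : ι → ℝ) : ℝ :=
  ∑ i, q i * f (p i / q i)

lemma csiszarDiv_linearComb {ι : Type*} [Fintype ι] (f g : ℝ → ℝ) (a b : ℝ) (p q : ι → ℝ) :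
    csiszarDiv (fun x => a * f x + b * g x) p q = a * csiszarDiv f p q + b * csiszarDiv g p q := by
  simp only [csiszarDiv, mul_sum, ← sum_add_distrib]
  exact sum_congr rfl fun i _ => by ring

lemma ConvexOn.csiszarDiv_nonneg {ι : Type*} [Fintype ι] {s : Set ℝ} {g : ℝ → ℝ}
    (hg : ConvexOn ℝ s g) (hg1 : g 1 = 0) {p q : ι → ℝ} (hq : ∀ i, 0 < q i)
    (hp1 : ∑ i, p i = 1) (hq1 : ∑ i, q i = 1) (hs : ∀ i, p i / q i ∈ s) :
    0 ≤ csiszarDiv g p q := by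
  have hbary : ∑ i, q i • (p i / q i) = 1 := by
    rw [← hp1]
    exact sum_congr rfl fun i _ => by rw [smul_eq_mul, mul_div_cancel₀ _ (hq i).ne']
  have hjensen := hg.map_sum_le (t := univ) (fun i _ => (hq i).le) hq1 (fun i _ => hs i)
  rw [hbary, hg1] at hjensen
  simpa [csiszarDiv] using hjensen

section LinearComb

variable {s : Set ℝ} {f g : ℝ → ℝ} {a b : ℝ}

lemma deriv_linearComb_eventuallyEq (hs : IsOpen s) (hf : ∀ x ∈ s, DifferentiableAt ℝ f x)
    (hg : ∀ x ∈ s, DifferentiableAt ℝ g x) {x : ℝ} (hx : x ∈ s) :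
    deriv (fun y => a * f y + b * g y) =ᶠ[𝓝 x] fun y => a * deriv f y + b * deriv g y := by
  filter_upwards [hs.mem_nhds hx] with y hy
  rw [deriv_fun_add ((hf y hy).const_mul a) ((hg y hy).const_mul b),
    deriv_const_mul a (hf y hy), deriv_const_mul b (hg y hy)]

lemma convexOn_linearComb_of_deriv2_nonneg (hs : IsOpen s) (hs' : Convex ℝ s)
    (hf : ∀ x ∈ s, DifferentiableAt ℝ f x ∧ DifferentiableAt ℝ (deriv f) x)
    (hg : ∀ x ∈ s, DifferentiableAt ℝ g x ∧ DifferentiableAt ℝ (deriv g) x)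
    (hnonneg : ∀ x ∈ s, 0 ≤ a * deriv (deriv f) x + b * deriv (deriv g) x) :
    ConvexOn ℝ s (fun x => a * f x + b * g x) := by
  have hderiv x (hx : x ∈ s) :=
    deriv_linearComb_eventuallyEq (a := a) (b := b) hs (fun y hy => (hf y hy).1)
      (fun y hy => (hg y hy).1) hx
  have hderiv' x (hx : x ∈ s) :
      DifferentiableAt ℝ (fun y => a * deriv f y + b * deriv g y) x :=
    ((hf x hx).2.const_mul a).add ((hg x hx).2.const_mul b)
  refine convexOn_of_deriv2_nonneg' hs'
    (fun x hx => (((hf x hx).1.const_mul a).add ((hg x hx).1.const_mul b)).differentiableWithinAt)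
    (fun x hx => ((hderiv' x hx).congr_of_eventuallyEq (hderiv x hx)).differentiableWithinAt)
    fun x hx => ?_
  rw [Function.iterate_succ_apply, Function.iterate_one, (hderiv x hx).deriv_eq,
    deriv_fun_add ((hf x hx).2.const_mul a) ((hg x hx).2.const_mul b),
    deriv_const_mul a (hf x hx).2, deriv_const_mul b (hg x hx).2]
  exact hnonneg x hx

end LinearComb

theorem stmt6_general (f₁ f₂ : ℝ → ℝ) (r R m M : ℝ)
    (h11 : f₁ 1 = 0) (h21 : f₂ 1 = 0)
    (hd1 : ∀ x ∈ Set.Ioo r R, DifferentiableAt ℝ f₁ x ∧ DifferentiableAt ℝ (deriv f₁) x)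
    (hd2 : ∀ x ∈ Set.Ioo r R, DifferentiableAt ℝ f₂ x ∧ DifferentiableAt ℝ (deriv f₂) x)
    (hpos : ∀ x ∈ Set.Ioo r R, 0 < deriv (deriv f₂) x)
    (hmM : ∀ x ∈ Set.Ioo r R, m ≤ deriv (deriv f₁) x / deriv (deriv f₂) x ∧
        deriv (deriv f₁) x / deriv (deriv f₂) x ≤ M)
    (n : ℕ) (p q : Fin n → ℝ)
    (hq : ∀ i, 0 < q i)
    (hp1 : ∑ i, p i = 1) (hq1 : ∑ i, q i = 1)
    (hrR : ∀ i, r < p i / q i ∧ p i / q i < R) :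
    m * ∑ i, q i * f₂ (p i / q i) ≤ ∑ i, q i * f₁ (p i / q i) ∧
      ∑ i, q i * f₁ (p i / q i) ≤ M * ∑ i, q i * f₂ (p i / q i) := by
  have hcomb (a b : ℝ)
      (hab : ∀ x ∈ Set.Ioo r R, 0 ≤ a * deriv (deriv f₁) x + b * deriv (deriv f₂) x) :
      0 ≤ a * csiszarDiv f₁ p q + b * csiszarDiv f₂ p q := by
    rw [← csiszarDiv_linearComb]
    exact (convexOn_linearComb_of_deriv2_nonneg isOpen_Ioo (convex_Ioo r R) hd1 hd2 hab
      ).csiszarDiv_nonneg (by simp [h11, h21]) hq hp1 hq1 hrR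
  have hlower := hcomb 1 (-m) fun x hx => by
    have := (le_div_iff₀ (hpos x hx)).mp (hmM x hx).1
    linarith
  have hupper := hcomb (-1) M fun x hx => by
    have := (div_le_iff₀ (hpos x hx)).mp (hmM x hx).2
    linarith
  simp only [csiszarDiv] at hlower hupper
  constructor <;> linarith

theorem stmt6 (f₁ f₂ : ℝ → ℝ) (r R m M : ℝ)
    (hc1 : ConvexOn ℝ (Set.Ioi 0) f₁) (hc2 : ConvexOn ℝ (Set.Ioi 0) f₂)
    (h11 : f₁ 1 = 0) (h21 : f₂ 1 = 0)
    (hd1 : ∀ x ∈ Set.Ioo r R, DifferentiableAt ℝ f₁ x ∧ DifferentiableAt ℝ (deriv f₁) x)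
    (hd2 : ∀ x ∈ Set.Ioo r R, DifferentiableAt ℝ f₂ x ∧ DifferentiableAt ℝ (deriv f₂) x)
    (hpos : ∀ x ∈ Set.Ioo r R, 0 < deriv (deriv f₂) x)
    (hmM : ∀ x ∈ Set.Ioo r R, m ≤ deriv (deriv f₁) x / deriv (deriv f₂) x ∧
        deriv (deriv f₁) x / deriv (deriv f₂) x ≤ M)
    (n : ℕ) (p q : Fin n → ℝ)
    (hp : ∀ i, 0 < p i) (hq : ∀ i, 0 < q i)
    (hp1 : ∑ i, p i = 1) (hq1 : ∑ i, q i = 1)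
    (hrR : ∀ i, r < p i / q i ∧ p i / q i < R) :
    m * ∑ i, q i * f₂ (p i / q i) ≤ ∑ i, q i * f₁ (p i / q i) ∧
      ∑ i, q i * f₁ (p i / q i) ≤ M * ∑ i, q i * f₂ (p i / q i) :=
  stmt6_general f₁ f₂ r R m M h11 h21 hd1 hd2 hpos hmM n p q hq hp1 hq1 hrR
end

section
/- For P, Q ∈ Γ_n with 0 < r ≤ p_i/q_i ≤ R for all i, the relative J-divergence D(P||Q) = ∑(p_i - q_i)ln((p_i+q_i)/(2q_i)) satisfies ((r+1)(r+3)/8)·Δ(P||Q) ≤ D(P||Q) ≤ ((R+1)(R+3)/8)·Δ(P||Q), where Δ(P||Q) = ∑(p_i - q_i)²/(p_i + q_i) is the triangular discrimination. -/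
/-!
Put `t = (p + q) / (2q)`, so that `p - q = 2q (t - 1)` and `p + q = 2qt`. Then the `i`-th terms of
`D(P‖Q)` and `Δ(P‖Q)` are `2q (t - 1) log t` and `2q (t - 1)² / t`, and the elementary bounds
`1 - 1/t ≤ log t ≤ t - 1` place `(t - 1) log t` between `min 1 t` and `max 1 t` times `(t - 1)² / t`.
Since `r ≤ 1 ≤ R` (both distributions sum to `1`) and `(r + 1) / 2 ≤ t ≤ (R + 1) / 2`, the constants
`(r + 1)(r + 3) / 8 ≤ (r + 1) / 2` and `(R + 1)(R + 3) / 8 ≥ (R + 1) / 2` bound these factors.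
-/

open Finset Real

section Log

variable {t : ℝ}

lemma min_one_mul_sq_div_le_sub_one_mul_log (ht : 0 < t) :
    min 1 t * ((t - 1) ^ 2 / t) ≤ (t - 1) * log t := by
  rcases le_total 1 t with h1 | h1
  · calc min 1 t * ((t - 1) ^ 2 / t) = (t - 1) * (1 - t⁻¹) := by
          rw [min_eq_left h1]; field_simp
      _ ≤ (t - 1) * log t :=
          mul_le_mul_of_nonneg_left (one_sub_inv_le_log_of_pos ht) (by linarith)
  · calc min 1 t * ((t - 1) ^ 2 / t) = (t - 1) * (t - 1) := by
          rw [min_eq_right h1]; field_simp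
      _ ≤ (t - 1) * log t :=
          mul_le_mul_of_nonpos_left (log_le_sub_one_of_pos ht) (by linarith)

lemma sub_one_mul_log_le_max_one_mul_sq_div (ht : 0 < t) :
    (t - 1) * log t ≤ max 1 t * ((t - 1) ^ 2 / t) := by
  rcases le_total 1 t with h1 | h1
  · calc (t - 1) * log t ≤ (t - 1) * (t - 1) :=
          mul_le_mul_of_nonneg_left (log_le_sub_one_of_pos ht) (by linarith)
      _ = max 1 t * ((t - 1) ^ 2 / t) := by rw [max_eq_right h1]; field_simp
  · calc (t - 1) * log t ≤ (t - 1) * (1 - t⁻¹) :=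
          mul_le_mul_of_nonpos_left (one_sub_inv_le_log_of_pos ht) (by linarith)
      _ = max 1 t * ((t - 1) ^ 2 / t) := by rw [max_eq_left h1]; field_simp

end Log

section Term

variable {p q : ℝ}

lemma sub_mul_log_add_div_two_mul_eq (hq : q ≠ 0) :
    (p - q) * log ((p + q) / (2 * q)) =
      2 * q * (((p + q) / (2 * q) - 1) * log ((p + q) / (2 * q))) := by
  rw [← mul_assoc]
  congr 1
  field_simp
  ring

lemma sq_sub_div_add_eq (hq : q ≠ 0) (hpq : p + q ≠ 0) :
    (p - q) ^ 2 / (p + q) = 2 * q * (((p + q) / (2 * q) - 1) ^ 2 / ((p + q) / (2 * q))) := by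
  field_simp
  ring

lemma mul_sq_sub_div_add_le_sub_mul_log {r : ℝ} (hq : 0 < q) (hr : 0 < r) (hr1 : r ≤ 1)
    (hrq : r * q ≤ p) :
    (r + 1) * (r + 3) / 8 * ((p - q) ^ 2 / (p + q)) ≤ (p - q) * log ((p + q) / (2 * q)) := by
  have hpq : 0 < p + q := by nlinarith
  set t := (p + q) / (2 * q) with ht_def
  have ht : 0 < t := by positivity
  have hrt : (r + 1) / 2 ≤ t := by
    rw [ht_def, le_div_iff₀ (by positivity)]
    linarith
  have hc : (r + 1) * (r + 3) / 8 ≤ min 1 t := le_min (by nlinarith) (by nlinarith)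
  rw [sub_mul_log_add_div_two_mul_eq hq.ne', sq_sub_div_add_eq hq.ne' hpq.ne', ← ht_def]
  calc (r + 1) * (r + 3) / 8 * (2 * q * ((t - 1) ^ 2 / t))
      = 2 * q * ((r + 1) * (r + 3) / 8 * ((t - 1) ^ 2 / t)) := by ring
    _ ≤ 2 * q * (min 1 t * ((t - 1) ^ 2 / t)) := by gcongr
    _ ≤ 2 * q * ((t - 1) * log t) := 
        mul_le_mul_of_nonneg_left (min_one_mul_sq_div_le_sub_one_mul_log ht) (by positivity)

lemma sub_mul_log_le_mul_sq_sub_div_add {R : ℝ} (hp : 0 < p) (hq : 0 < q) (hR1 : 1 ≤ R)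
    (hRq : p ≤ R * q) :
    (p - q) * log ((p + q) / (2 * q)) ≤ (R + 1) * (R + 3) / 8 * ((p - q) ^ 2 / (p + q)) := by
  have hpq : 0 < p + q := by positivity
  set t := (p + q) / (2 * q) with ht_def
  have ht : 0 < t := by positivity
  have htR : t ≤ (R + 1) / 2 := by
    rw [ht_def, div_le_iff₀ (by positivity)]
    linarith
  have hc : max 1 t ≤ (R + 1) * (R + 3) / 8 := max_le (by nlinarith) (by nlinarith)
  rw [sub_mul_log_add_div_two_mul_eq hq.ne', sq_sub_div_add_eq hq.ne' hpq.ne', ← ht_def]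
  calc 2 * q * ((t - 1) * log t)
      ≤ 2 * q * (max 1 t * ((t - 1) ^ 2 / t)) :=
        mul_le_mul_of_nonneg_left (sub_one_mul_log_le_max_one_mul_sq_div ht) (by positivity)
    _ ≤ 2 * q * ((R + 1) * (R + 3) / 8 * ((t - 1) ^ 2 / t)) := by gcongr
    _ = (R + 1) * (R + 3) / 8 * (2 * q * ((t - 1) ^ 2 / t)) := by ring

end Term

section Probability

variable {ι : Type*} [Fintype ι] {p q : ι → ℝ} {c : ℝ}

lemma le_one_of_forall_mul_le (hp1 : ∑ i, p i = 1) (hq1 : ∑ i, q i = 1)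
    (h : ∀ i, c * q i ≤ p i) : c ≤ 1 :=
  calc c = ∑ i, c * q i := by rw [← mul_sum, hq1, mul_one]
    _ ≤ ∑ i, p i := sum_le_sum fun i _ ↦ h i
    _ = 1 := hp1

lemma one_le_of_forall_le_mul (hp1 : ∑ i, p i = 1) (hq1 : ∑ i, q i = 1)
    (h : ∀ i, p i ≤ c * q i) : 1 ≤ c :=
  calc 1 = ∑ i, p i := hp1.symm
    _ ≤ ∑ i, c * q i := sum_le_sum fun i _ ↦ h i
    _ = c := by rw [← mul_sum, hq1, mul_one]

end Probability

theorem stmt7 (n : ℕ) (p q : Fin n → ℝ)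
    (hp : ∀ i, 0 < p i) (hq : ∀ i, 0 < q i)
    (hp1 : ∑ i, p i = 1) (hq1 : ∑ i, q i = 1)
    (r R : ℝ) (hr : 0 < r) (hrR : ∀ i, r ≤ p i / q i ∧ p i / q i ≤ R) :
    ((r+1)*(r+3)/8) * (∑ i, (p i - q i)^2 / (p i + q i)) ≤ (∑ i, (p i - q i) * Real.log ((p i + q i) / (2 * q i))) ∧ (∑ i, (p i - q i) * Real.log ((p i + q i) / (2 * q i))) ≤ ((R+1)*(R+3)/8) * (∑ i, (p i - q i)^2 / (p i + q i)) := by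
  have hrq : ∀ i, r * q i ≤ p i := fun i ↦ (le_div_iff₀ (hq i)).mp (hrR i).1
  have hRq : ∀ i, p i ≤ R * q i := fun i ↦ (div_le_iff₀ (hq i)).mp (hrR i).2
  have hr1 : r ≤ 1 := le_one_of_forall_mul_le hp1 hq1 hrq
  have hR1 : 1 ≤ R := one_le_of_forall_le_mul hp1 hq1 hRq
  rw [mul_sum, mul_sum]
  exact ⟨sum_le_sum fun i _ ↦ mul_sq_sub_div_add_le_sub_mul_log (hq i) hr hr1 (hrq i),
    sum_le_sum fun i _ ↦ sub_mul_log_le_mul_sq_sub_div_add (hp i) (hq i) hR1 (hRq i)⟩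
end

section
/- For P, Q ∈ Γ_n with 0 < r ≤ p_i/q_i ≤ R for all i, the relative J-divergence D(P||Q) = ∑(p_i - q_i)ln((p_i+q_i)/(2q_i)) satisfies (r²(r+3)/(r+1)³)·J(P||Q) ≤ D(P||Q) ≤ (R²(R+3)/(R+1)³)·J(P||Q), where J(P||Q) = ∑(p_i - q_i)ln(p_i/q_i). -/
/-!
Both divergences are f-divergences, `J = ∑ qᵢ j(pᵢ/qᵢ)` and `D = ∑ qᵢ d(pᵢ/qᵢ)`, with
generators `j t = (t - 1) log t` and `d t = (t - 1) log ((t + 1)/2)`. Both vanish together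
with their first derivatives at `t = 1`, and `φ = d''/j'' = t²(t + 3)/(t + 1)³` is
increasing. Since `∑ p = ∑ q` forces `r ≤ 1 ≤ R`, on `[r, R]` the functions `d - φ(r) j`
and `φ(R) j - d` are convex with a critical point at `1`, so they are nonnegative; summing
against `q` gives the two bounds.
-/

open Finset Real Set

section Comparison

variable {D : Set ℝ} {f f' f'' g g' g'' : ℝ → ℝ} {a x : ℝ}

lemma ConvexOn.le_of_hasDerivAt_zero (hf : ConvexOn ℝ D f) (ha : a ∈ D) (hx : x ∈ D)
    (hfa : HasDerivAt f 0 a) : f a ≤ f x := by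
  rcases lt_trichotomy x a with hxa | rfl | hax
  · have := hf.slope_le_of_hasDerivAt hx ha hxa hfa
    rw [slope_def_field, div_nonpos_iff] at this
    rcases this with ⟨-, h⟩ | ⟨h, -⟩ <;> linarith
  · rfl
  · have := hf.le_slope_of_hasDerivAt ha hx hax hfa
    rw [slope_def_field, div_nonneg_iff] at this
    rcases this with ⟨h, -⟩ | ⟨-, h⟩ <;> linarith

lemma convexOn_of_hasDerivAt2_nonneg (hD : Convex ℝ D)
    (hf : ∀ y ∈ D, HasDerivAt f (f' y) y) (hf' : ∀ y ∈ D, HasDerivAt f' (f'' y) y)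
    (hf'' : ∀ y ∈ D, 0 ≤ f'' y) : ConvexOn ℝ D f :=
  convexOn_of_hasDerivWithinAt2_nonneg hD
    (fun y hy ↦ (hf y hy).continuousAt.continuousWithinAt)
    (fun y hy ↦ (hf y (interior_subset hy)).hasDerivWithinAt)
    (fun y hy ↦ (hf' y (interior_subset hy)).hasDerivWithinAt)
    (fun y hy ↦ hf'' y (interior_subset hy))

lemma le_of_hasDerivAt2_le (hD : Convex ℝ D) (ha : a ∈ D) (hx : x ∈ D)
    (hf : ∀ y ∈ D, HasDerivAt f (f' y) y) (hf' : ∀ y ∈ D, HasDerivAt f' (f'' y) y)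
    (hg : ∀ y ∈ D, HasDerivAt g (g' y) y) (hg' : ∀ y ∈ D, HasDerivAt g' (g'' y) y)
    (h'' : ∀ y ∈ D, f'' y ≤ g'' y) (h₀ : f a = g a) (h₁ : f' a = g' a) : f x ≤ g x := by
  have hconv : ConvexOn ℝ D (g - f) :=
    convexOn_of_hasDerivAt2_nonneg hD (fun y hy ↦ (hg y hy).sub (hf y hy))
      (fun y hy ↦ (hg' y hy).sub (hf' y hy)) (fun y hy ↦ sub_nonneg.2 (h'' y hy))
  have hcrit : HasDerivAt (g - f) 0 a := by
    simpa [h₁] using (hg a ha).sub (hf a ha)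
  have := hconv.le_of_hasDerivAt_zero ha hx hcrit
  simp only [Pi.sub_apply, h₀, sub_self] at this
  linarith

end Comparison

section Generators

noncomputable def jeffreysGen (t : ℝ) : ℝ := (t - 1) * log t

noncomputable def relJeffreysGen (t : ℝ) : ℝ := (t - 1) * log ((t + 1) / 2)

noncomputable def jeffreysRatio (t : ℝ) : ℝ := t ^ 2 * (t + 3) / (t + 1) ^ 3

variable {t : ℝ}

lemma hasDerivAt_jeffreysGen (ht : t ≠ 0) :
    HasDerivAt jeffreysGen (log t + (t - 1) / t) t :=
  (((hasDerivAt_id' t).sub_const 1).mul (hasDerivAt_log ht)).congr_deriv (by ring)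

lemma hasDerivAt_jeffreysGen_deriv (ht : t ≠ 0) :
    HasDerivAt (fun t ↦ log t + (t - 1) / t) ((t + 1) / t ^ 2) t :=
  ((hasDerivAt_log ht).add
    (((hasDerivAt_id' t).sub_const 1).div (hasDerivAt_id' t) ht)).congr_deriv (by field_simp; ring)

lemma hasDerivAt_relJeffreysGen (ht : t + 1 ≠ 0) :
    HasDerivAt relJeffreysGen (log ((t + 1) / 2) + (t - 1) / (t + 1)) t :=
  (((hasDerivAt_id' t).sub_const 1).mul
    ((((hasDerivAt_id' t).add_const 1).div_const 2).log (by simpa))).congr_deriv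
    (by field_simp)

lemma hasDerivAt_relJeffreysGen_deriv (ht : t + 1 ≠ 0) :
    HasDerivAt (fun t ↦ log ((t + 1) / 2) + (t - 1) / (t + 1)) ((t + 3) / (t + 1) ^ 2) t :=
  (((((hasDerivAt_id' t).add_const 1).div_const 2).log (by simpa)).add
    (((hasDerivAt_id' t).sub_const 1).div ((hasDerivAt_id' t).add_const 1) ht)).congr_deriv
    (by field_simp; ring)

lemma jeffreysRatio_mul (ht : 0 < t) :
    jeffreysRatio t * ((t + 1) / t ^ 2) = (t + 3) / (t + 1) ^ 2 := by
  unfold jeffreysRatio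
  field_simp

lemma jeffreysRatio_monotoneOn : MonotoneOn jeffreysRatio (Ioi 0) := by
  intro a (ha : 0 < a) b (hb : 0 < b) hab
  unfold jeffreysRatio
  rw [div_le_div_iff₀ (by positivity) (by positivity)]
  nlinarith [sq_nonneg (a * b - 1), sq_nonneg (a - b), mul_pos ha hb, sq_nonneg (a + b),
    mul_nonneg (sub_nonneg.2 hab) (mul_pos ha hb).le, sq_nonneg (a * b)]

lemma jeffreysRatio_mul_jeffreysGen_le {r : ℝ} (hr : 0 < r) (hr1 : r ≤ 1) (hrt : r ≤ t) :
    jeffreysRatio r * jeffreysGen t ≤ relJeffreysGen t := by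
  have hpos : ∀ y ∈ Ici r, 0 < y := fun y hy ↦ hr.trans_le hy
  refine le_of_hasDerivAt2_le (convex_Ici r) (a := 1) hr1 hrt
    (fun y hy ↦ (hasDerivAt_jeffreysGen (hpos y hy).ne').const_mul _)
    (fun y hy ↦ (hasDerivAt_jeffreysGen_deriv (hpos y hy).ne').const_mul _)
    (fun y hy ↦ hasDerivAt_relJeffreysGen (by linarith [hpos y hy]))
    (fun y hy ↦ hasDerivAt_relJeffreysGen_deriv (by linarith [hpos y hy]))
    (fun y hy ↦ ?_) (by simp [jeffreysGen, relJeffreysGen]) (by simp)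
  rw [← jeffreysRatio_mul (hpos y hy)]
  exact mul_le_mul_of_nonneg_right (jeffreysRatio_monotoneOn hr (hpos y hy) hy)
    (by have := hpos y hy; positivity)

lemma relJeffreysGen_le_jeffreysRatio_mul_jeffreysGen {R : ℝ} (hR1 : 1 ≤ R) (ht : 0 < t)
    (htR : t ≤ R) : relJeffreysGen t ≤ jeffreysRatio R * jeffreysGen t := by
  refine le_of_hasDerivAt2_le (convex_Ioc 0 R) (a := 1) ⟨one_pos, hR1⟩ ⟨ht, htR⟩
    (fun y hy ↦ hasDerivAt_relJeffreysGen (by linarith [hy.1]))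
    (fun y hy ↦ hasDerivAt_relJeffreysGen_deriv (by linarith [hy.1]))
    (fun y hy ↦ (hasDerivAt_jeffreysGen hy.1.ne').const_mul _)
    (fun y hy ↦ (hasDerivAt_jeffreysGen_deriv hy.1.ne').const_mul _)
    (fun y hy ↦ ?_) (by simp [jeffreysGen, relJeffreysGen]) (by simp)
  rw [← jeffreysRatio_mul hy.1]
  exact mul_le_mul_of_nonneg_right (jeffreysRatio_monotoneOn hy.1 (hy.1.trans_le hy.2) hy.2)
    (by have := hy.1; positivity)

end Generators

section Divergences

variable {p q : ℝ}

lemma sub_mul_log_div_eq (hq : q ≠ 0) : (p - q) * log (p / q) = q * jeffreysGen (p / q) := by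
  unfold jeffreysGen
  field_simp

lemma sub_mul_log_add_div_eq (hq : q ≠ 0) :
    (p - q) * log ((p + q) / (2 * q)) = q * relJeffreysGen (p / q) := by
  unfold relJeffreysGen
  rw [show (p / q + 1) / 2 = (p + q) / (2 * q) by field_simp]
  field_simp

end Divergences

theorem stmt8_general (n : ℕ) (p q : Fin n → ℝ)
    (hq : ∀ i, 0 < q i)
    (hp1 : ∑ i, p i = 1) (hq1 : ∑ i, q i = 1)
    (r R : ℝ) (hr : 0 < r) (hrR : ∀ i, r ≤ p i / q i ∧ p i / q i ≤ R) :
    (r^2*(r+3)/(r+1)^3) * (∑ i, (p i - q i) * Real.log (p i / q i)) ≤ (∑ i, (p i - q i) * Real.log ((p i + q i) / (2 * q i))) ∧ (∑ i, (p i - q i) * Real.log ((p i + q i) / (2 * q i))) ≤ (R^2*(R+3)/(R+1)^3) * (∑ i, (p i - q i) * Real.log (p i / q i)) := by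
  have hne : (univ : Finset (Fin n)).Nonempty := nonempty_of_sum_ne_zero (f := p) (by simp [hp1])
  have hr1 : r ≤ 1 := by
    obtain ⟨i, -, hi⟩ := exists_le_of_sum_le hne (hp1.trans hq1.symm).le
    exact (hrR i).1.trans ((div_le_one (hq i)).2 hi)
  have hR1 : 1 ≤ R := by
    obtain ⟨i, -, hi⟩ := exists_le_of_sum_le hne (hq1.trans hp1.symm).le
    exact ((one_le_div (hq i)).2 hi).trans (hrR i).2
  simp only [sub_mul_log_div_eq (hq _).ne', sub_mul_log_add_div_eq (hq _).ne', mul_sum]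
  constructor <;> refine sum_le_sum fun i _ ↦ ?_ <;> rw [mul_left_comm]
  · exact mul_le_mul_of_nonneg_left (jeffreysRatio_mul_jeffreysGen_le hr hr1 (hrR i).1) (hq i).le
  · exact mul_le_mul_of_nonneg_left (relJeffreysGen_le_jeffreysRatio_mul_jeffreysGen hR1
      (hr.trans_le (hrR i).1) (hrR i).2) (hq i).le

theorem stmt8 (n : ℕ) (p q : Fin n → ℝ)
    (hp : ∀ i, 0 < p i) (hq : ∀ i, 0 < q i)
    (hp1 : ∑ i, p i = 1) (hq1 : ∑ i, q i = 1)
    (r R : ℝ) (hr : 0 < r) (hrR : ∀ i, r ≤ p i / q i ∧ p i / q i ≤ R) :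
    (r^2*(r+3)/(r+1)^3) * (∑ i, (p i - q i) * Real.log (p i / q i)) ≤ (∑ i, (p i - q i) * Real.log ((p i + q i) / (2 * q i))) ∧ (∑ i, (p i - q i) * Real.log ((p i + q i) / (2 * q i))) ≤ (R^2*(R+3)/(R+1)^3) * (∑ i, (p i - q i) * Real.log (p i / q i)) :=
  stmt8_general n p q hq hp1 hq1 r R hr hrR
end

section
/- For P, Q ∈ Γ_n with 0 < r ≤ p_i/q_i ≤ R for all i, the relative J-divergence D(P||Q) = ∑(p_i - q_i)ln((p_i+q_i)/(2q_i)) satisfies (2r(r+3)/(r+1))·I(P||Q) ≤ D(P||Q) ≤ (2R(R+3)/(R+1))·I(P||Q), where I(P||Q) = (1/2)∑[p_i ln(2p_i/(p_i+q_i)) + q_i ln(2q_i/(p_i+q_i))] is the Jensen-Shannon divergence. -/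
/-!
Both divergences are Csiszár f-divergences `∑ qᵢ f(pᵢ/qᵢ)`, with generators
`f_D(t) = (t-1) log((t+1)/2)` and `f_I(t) = (t log(2t/(t+1)) + log(2/(t+1)))/2`, which vanish
together with their derivatives at `t = 1`. Their second derivatives satisfy
`f_D''(t) = ρ(t) f_I''(t)` with `ρ(t) = 2t(t+3)/(t+1)` increasing. Hence for `c = ρ(r)` the
function `f_D - c f_I` is convex on `[r, ∞)`, and for `c = ρ(R)` concave on `(0, R]`; since both
intervals contain `1` (the ratios `pᵢ/qᵢ` straddle `1` because `∑ pᵢ = ∑ qᵢ`), the function has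
its minimum, resp. maximum, `0` there. Summing `qᵢ (f_D - c f_I)(pᵢ/qᵢ)` gives both bounds.
-/

open Finset Real Set

theorem isMinOn_of_hasDerivAt_of_monotoneOn {f f' : ℝ → ℝ} {s : Set ℝ} (hs : s.OrdConnected)
    (hf : ∀ x ∈ s, HasDerivAt f (f' x) x) (hf' : MonotoneOn f' s) {a : ℝ} (ha : a ∈ s)
    (ha' : f' a = 0) : IsMinOn f s a := by
  intro x hx
  have hderiv {u v : ℝ} (hu : u ∈ s) (hv : v ∈ s) :
      ∀ y ∈ interior (Icc u v), HasDerivWithinAt f (f' y) (interior (Icc u v)) y := by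
    intro y hy
    rw [interior_Icc] at hy
    exact (hf y (hs.out hu hv (Ioo_subset_Icc_self hy))).hasDerivWithinAt
  have hcont {u v : ℝ} (hu : u ∈ s) (hv : v ∈ s) : ContinuousOn f (Icc u v) :=
    fun y hy ↦ (hf y (hs.out hu hv hy)).continuousAt.continuousWithinAt
  rcases le_total a x with hax | hxa
  · refine monotoneOn_of_hasDerivWithinAt_nonneg (convex_Icc a x) (hcont ha hx) (hderiv ha hx)
      (fun y hy ↦ ?_) (left_mem_Icc.2 hax) (right_mem_Icc.2 hax) hax
    rw [interior_Icc] at hy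
    exact ha' ▸ hf' ha (hs.out ha hx (Ioo_subset_Icc_self hy)) hy.1.le
  · refine antitoneOn_of_hasDerivWithinAt_nonpos (convex_Icc x a) (hcont hx ha) (hderiv hx ha)
      (fun y hy ↦ ?_) (left_mem_Icc.2 hxa) (right_mem_Icc.2 hxa) hxa
    rw [interior_Icc] at hy
    exact ha' ▸ hf' (hs.out hx ha (Ioo_subset_Icc_self hy)) ha hy.2.le

theorem isMaxOn_of_hasDerivAt_of_antitoneOn {f f' : ℝ → ℝ} {s : Set ℝ} (hs : s.OrdConnected)
    (hf : ∀ x ∈ s, HasDerivAt f (f' x) x) (hf' : AntitoneOn f' s) {a : ℝ} (ha : a ∈ s)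
    (ha' : f' a = 0) : IsMaxOn f s a := by
  have := isMinOn_of_hasDerivAt_of_monotoneOn hs (fun x hx ↦ (hf x hx).neg) hf'.neg ha
    (by simp [ha'])
  exact fun x hx ↦ by simpa using this hx

noncomputable section

section fDiv

variable {ι : Type*} [Fintype ι]

def fDiv (f : ℝ → ℝ) (p q : ι → ℝ) : ℝ := ∑ i, q i * f (p i / q i)

theorem fDiv_const_mul (c : ℝ) (f : ℝ → ℝ) (p q : ι → ℝ) :
    fDiv (fun t ↦ c * f t) p q = c * fDiv f p q := by
  simp only [fDiv, mul_sum]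
  exact sum_congr rfl fun i _ ↦ by ring

theorem fDiv_le_fDiv {f g : ℝ → ℝ} {p q : ι → ℝ} (hq : ∀ i, 0 ≤ q i)
    (h : ∀ i, f (p i / q i) ≤ g (p i / q i)) : fDiv f p q ≤ fDiv g p q :=
  sum_le_sum fun i _ ↦ mul_le_mul_of_nonneg_left (h i) (hq i)

end fDiv

def relJGen (t : ℝ) : ℝ := (t - 1) * log ((t + 1) / 2)

def relJGenDeriv (t : ℝ) : ℝ := log ((t + 1) / 2) + (t - 1) / (t + 1)

def jsGen (t : ℝ) : ℝ := (t * log (2 * t / (t + 1)) + log (2 / (t + 1))) / 2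

def jsGenDeriv (t : ℝ) : ℝ := log (2 * t / (t + 1)) / 2

/-- The ratio `relJGen'' / jsGen''`. -/
def relJRatio (t : ℝ) : ℝ := 2 * t * (t + 3) / (t + 1)

theorem fDiv_relJGen {ι : Type*} [Fintype ι] {p q : ι → ℝ} (hq : ∀ i, q i ≠ 0) :
    fDiv relJGen p q = ∑ i, (p i - q i) * log ((p i + q i) / (2 * q i)) := by
  refine sum_congr rfl fun i _ ↦ ?_
  rw [relJGen, ← mul_assoc, mul_sub, mul_div_cancel₀ _ (hq i), mul_one, div_add_one (hq i), div_div, mul_comm (q i)]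

theorem fDiv_jsGen {ι : Type*} [Fintype ι] {p q : ι → ℝ} (hq : ∀ i, q i ≠ 0) :
    fDiv jsGen p q = 1 / 2 * ∑ i, (p i * log (2 * p i / (p i + q i))
      + q i * log (2 * q i / (p i + q i))) := by
  rw [mul_sum]
  refine sum_congr rfl fun i _ ↦ ?_
  have hqi := hq i
  have h₁ : 2 * (p i / q i) / (p i / q i + 1) = 2 * p i / (p i + q i) := by
    rw [div_add_one hqi, mul_div_assoc', div_div_div_cancel_right₀ hqi]
  have h₂ : 2 / (p i / q i + 1) = 2 * q i / (p i + q i) := by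
    rw [div_add_one hqi, div_div_eq_mul_div]
  rw [jsGen, h₁, h₂]
  field_simp

theorem hasDerivAt_log_add_one_div_two {t : ℝ} (ht : 0 < t + 1) :
    HasDerivAt (fun x ↦ log ((x + 1) / 2)) (1 / (t + 1)) t := by
  have h := (((hasDerivAt_id' t).add_const 1).div_const 2).log (by positivity)
  exact h.congr_deriv (by field_simp)

theorem hasDerivAt_log_two_mul_div_add_one {t : ℝ} (ht : 0 < t) :
    HasDerivAt (fun x ↦ log (2 * x / (x + 1))) (1 / (t * (t + 1))) t := by
  have ht1 : 0 < t + 1 := by linarith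
  have h := ((((hasDerivAt_id' t).const_mul 2).fun_div ((hasDerivAt_id' t).add_const 1)
    ht1.ne').log (by positivity))
  exact h.congr_deriv (by field_simp; ring)

theorem hasDerivAt_relJGen {t : ℝ} (ht : 0 < t + 1) : HasDerivAt relJGen (relJGenDeriv t) t := by
  have h := ((hasDerivAt_id' t).sub_const 1).fun_mul (hasDerivAt_log_add_one_div_two ht)
  exact h.congr_deriv (by simp only [relJGenDeriv]; field_simp)

theorem hasDerivAt_relJGenDeriv {t : ℝ} (ht : 0 < t + 1) :
    HasDerivAt relJGenDeriv ((t + 3) / (t + 1) ^ 2) t := by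
  have h := (hasDerivAt_log_add_one_div_two ht).fun_add
    (((hasDerivAt_id' t).sub_const 1).fun_div ((hasDerivAt_id' t).add_const 1) ht.ne')
  exact h.congr_deriv (by field_simp; ring)

theorem hasDerivAt_jsGen {t : ℝ} (ht : 0 < t) : HasDerivAt jsGen (jsGenDeriv t) t := by
  have ht1 : 0 < t + 1 := by linarith
  have hlog := (((hasDerivAt_const t (2 : ℝ)).fun_div ((hasDerivAt_id' t).add_const 1)
    ht1.ne').log (by positivity))
  have h := (((hasDerivAt_id' t).fun_mul (hasDerivAt_log_two_mul_div_add_one ht)).fun_add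
    hlog).div_const 2
  exact h.congr_deriv (by simp only [jsGenDeriv]; field_simp; ring)

theorem hasDerivAt_jsGenDeriv {t : ℝ} (ht : 0 < t) :
    HasDerivAt jsGenDeriv (1 / (2 * t * (t + 1))) t := by
  have h := (hasDerivAt_log_two_mul_div_add_one ht).div_const 2
  exact h.congr_deriv (by field_simp)

theorem relJGen_one : relJGen 1 = 0 := by simp [relJGen]

theorem jsGen_one : jsGen 1 = 0 := by norm_num [jsGen]

theorem relJGenDeriv_one : relJGenDeriv 1 = 0 := by norm_num [relJGenDeriv]

theorem jsGenDeriv_one : jsGenDeriv 1 = 0 := by norm_num [jsGenDeriv]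

theorem monotoneOn_relJRatio : MonotoneOn relJRatio (Ioi (-1)) := by
  intro a ha b hb hab
  have ha' : 0 < a + 1 := neg_lt_iff_pos_add.1 ha
  have hb' : 0 < b + 1 := neg_lt_iff_pos_add.1 hb
  simp only [relJRatio]
  rw [div_le_div_iff₀ ha' hb']
  nlinarith [mul_nonneg (sub_nonneg.2 hab) (add_pos ha' hb').le, mul_pos ha' hb']

theorem hasDerivAt_relJGenDeriv_sub_mul_jsGenDeriv (c : ℝ) {t : ℝ} (ht : 0 < t) :
    HasDerivAt (fun x ↦ relJGenDeriv x - c * jsGenDeriv x)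
      ((relJRatio t - c) / (2 * t * (t + 1))) t := by
  have ht1 : 0 < t + 1 := by linarith
  have h := (hasDerivAt_relJGenDeriv ht1).sub ((hasDerivAt_jsGenDeriv ht).const_mul c)
  exact h.congr_deriv (by simp only [relJRatio]; field_simp)

theorem monotoneOn_relJGenDeriv_sub_mul_jsGenDeriv {s : ℝ} (hs : 0 < s) :
    MonotoneOn (fun x ↦ relJGenDeriv x - relJRatio s * jsGenDeriv x) (Ici s) := by
  have hderiv {x : ℝ} (hx : x ∈ Ici s) := hasDerivAt_relJGenDeriv_sub_mul_jsGenDeriv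
    (relJRatio s) (hs.trans_le hx)
  refine monotoneOn_of_hasDerivWithinAt_nonneg (convex_Ici s)
    (fun x hx ↦ (hderiv hx).continuousAt.continuousWithinAt)
    (fun x hx ↦ (hderiv (interior_subset hx)).hasDerivWithinAt) fun x hx ↦ ?_
  rw [interior_Ici] at hx
  have hx0 : 0 < x := hs.trans hx
  have hratio := monotoneOn_relJRatio (mem_Ioi.2 (by linarith)) (mem_Ioi.2 (by linarith)) hx.le
  exact div_nonneg (sub_nonneg.2 hratio) (by positivity)

theorem antitoneOn_relJGenDeriv_sub_mul_jsGenDeriv {s : ℝ} (hs : 0 < s) :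
    AntitoneOn (fun x ↦ relJGenDeriv x - relJRatio s * jsGenDeriv x) (Ioc 0 s) := by
  have hderiv {x : ℝ} (hx : x ∈ Ioc 0 s) := hasDerivAt_relJGenDeriv_sub_mul_jsGenDeriv
    (relJRatio s) hx.1
  refine antitoneOn_of_hasDerivWithinAt_nonpos (convex_Ioc 0 s)
    (fun x hx ↦ (hderiv hx).continuousAt.continuousWithinAt)
    (fun x hx ↦ (hderiv (interior_subset hx)).hasDerivWithinAt) fun x hx ↦ ?_
  rw [interior_Ioc] at hx
  have hratio := monotoneOn_relJRatio (mem_Ioi.2 (by linarith [hx.1]))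
    (mem_Ioi.2 (by linarith)) hx.2.le
  exact div_nonpos_of_nonpos_of_nonneg (sub_nonpos.2 hratio) (by nlinarith [hx.1])

theorem relJRatio_mul_jsGen_le_relJGen {s t : ℝ} (hs : 0 < s) (hs1 : s ≤ 1) (ht : s ≤ t) :
    relJRatio s * jsGen t ≤ relJGen t := by
  have hmin := isMinOn_of_hasDerivAt_of_monotoneOn ordConnected_Ici
    (fun x hx ↦ (hasDerivAt_relJGen (by linarith [mem_Ici.1 hx])).sub
      ((hasDerivAt_jsGen (hs.trans_le hx)).const_mul (relJRatio s)))
    (monotoneOn_relJGenDeriv_sub_mul_jsGenDeriv hs) (mem_Ici.2 hs1)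
    (by simp [relJGenDeriv_one, jsGenDeriv_one]) (mem_Ici.2 ht)
  simpa [relJGen_one, jsGen_one] using hmin

theorem relJGen_le_relJRatio_mul_jsGen {s t : ℝ} (hs1 : 1 ≤ s) (ht : 0 < t) (hts : t ≤ s) :
    relJGen t ≤ relJRatio s * jsGen t := by
  have hmax := isMaxOn_of_hasDerivAt_of_antitoneOn ordConnected_Ioc
    (fun x hx ↦ (hasDerivAt_relJGen (by linarith [hx.1])).sub
      ((hasDerivAt_jsGen hx.1).const_mul (relJRatio s)))
    (antitoneOn_relJGenDeriv_sub_mul_jsGenDeriv (by linarith)) ⟨one_pos, hs1⟩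
    (by simp [relJGenDeriv_one, jsGenDeriv_one]) ⟨ht, hts⟩
  simpa [relJGen_one, jsGen_one] using hmax

end

theorem stmt9_general (n : ℕ) (p q : Fin n → ℝ)
    (hq : ∀ i, 0 < q i)
    (hp1 : ∑ i, p i = 1) (hq1 : ∑ i, q i = 1)
    (r R : ℝ) (hr : 0 < r) (hrR : ∀ i, r ≤ p i / q i ∧ p i / q i ≤ R) :
    (2*r*(r+3)/(r+1)) * (((1:ℝ)/2) * ∑ i, (p i * Real.log (2 * p i / (p i + q i)) + q i * Real.log (2 * q i / (p i + q i)))) ≤ (∑ i, (p i - q i) * Real.log ((p i + q i) / (2 * q i))) ∧ (∑ i, (p i - q i) * Real.log ((p i + q i) / (2 * q i))) ≤ (2*R*(R+3)/(R+1)) * (((1:ℝ)/2) * ∑ i, (p i * Real.log (2 * p i / (p i + q i)) + q i * Real.log (2 * q i / (p i + q i)))) := by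
  have hne : (univ : Finset (Fin n)).Nonempty := nonempty_of_sum_ne_zero (hp1 ▸ one_ne_zero)
  obtain ⟨i, -, hi⟩ := exists_le_of_sum_le hne (hp1.trans hq1.symm).le
  obtain ⟨j, -, hj⟩ := exists_le_of_sum_le hne (hq1.trans hp1.symm).le
  have hr1 : r ≤ 1 := (hrR i).1.trans ((div_le_one (hq i)).2 hi)
  have hR1 : 1 ≤ R := ((one_le_div (hq j)).2 hj).trans (hrR j).2
  have hq0 : ∀ i, 0 ≤ q i := fun i ↦ (hq i).le
  have hq_ne : ∀ i, q i ≠ 0 := fun i ↦ (hq i).ne'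
  rw [← fDiv_relJGen hq_ne, ← fDiv_jsGen hq_ne]
  constructor
  · rw [← fDiv_const_mul]
    exact fDiv_le_fDiv hq0 fun i ↦ relJRatio_mul_jsGen_le_relJGen hr hr1 (hrR i).1
  · rw [← fDiv_const_mul]
    exact fDiv_le_fDiv hq0 fun i ↦
      relJGen_le_relJRatio_mul_jsGen hR1 (hr.trans_le (hrR i).1) (hrR i).2

theorem stmt9 (n : ℕ) (p q : Fin n → ℝ)
    (hp : ∀ i, 0 < p i) (hq : ∀ i, 0 < q i)
    (hp1 : ∑ i, p i = 1) (hq1 : ∑ i, q i = 1)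
    (r R : ℝ) (hr : 0 < r) (hrR : ∀ i, r ≤ p i / q i ∧ p i / q i ≤ R) :
    (2*r*(r+3)/(r+1)) * (((1:ℝ)/2) * ∑ i, (p i * Real.log (2 * p i / (p i + q i)) + q i * Real.log (2 * q i / (p i + q i)))) ≤ (∑ i, (p i - q i) * Real.log ((p i + q i) / (2 * q i))) ∧ (∑ i, (p i - q i) * Real.log ((p i + q i) / (2 * q i))) ≤ (2*R*(R+3)/(R+1)) * (((1:ℝ)/2) * ∑ i, (p i * Real.log (2 * p i / (p i + q i)) + q i * Real.log (2 * q i / (p i + q i)))) :=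
  stmt9_general n p q hq hp1 hq1 r R hr hrR
end

section
/- For P, Q ∈ Γ_n with 0 < r ≤ p_i/q_i ≤ R for all i, the relative Jensen-Shannon divergence F(P||Q) = ∑p_i ln(2p_i/(p_i+q_i)) satisfies ((R+1)/(8R))·Δ(P||Q) ≤ F(P||Q) ≤ ((r+1)/(8r))·Δ(P||Q), where Δ(P||Q) = ∑(p_i - q_i)²/(p_i + q_i). -/
/-!
With `t = 2p/(p+q)`, each summand of `F` corrected by `(q - p)/2` (these corrections sum to zero)
is `(p+q)/2 · klFun t`, where `klFun t = t log t + 1 - t`, while the corresponding summand of `Δ`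
is `(p+q)(t-1)²`. So everything reduces to the scalar bounds
`(t-1)²/(2 max t 1) ≤ klFun t ≤ (t-1)²/(2 min t 1)`, which follow from the monotonicity of
`klFun t - (t-1)²/(2t)` and `klFun t - (t-1)²/2`; the ratio bounds `r ≤ p/q ≤ R` become
`2r/(r+1) ≤ t ≤ 2R/(R+1)`, and `r ≤ 1 ≤ R` because `P` and `Q` both have total mass one.
-/

open Finset Real InformationTheory

namespace InformationTheory

theorem monotoneOn_klFun_sub_sq_div_two_mul_self :
    MonotoneOn (fun x : ℝ => klFun x - (x - 1) ^ 2 / (2 * x)) (Set.Ioi 0) := by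
  have hderiv : ∀ x : ℝ, 0 < x → HasDerivAt (fun x : ℝ => klFun x - (x - 1) ^ 2 / (2 * x))
      (log x - 1 / 2 + 1 / (2 * x ^ 2)) x := by
    intro x hx
    have hsq : HasDerivAt (fun x : ℝ => (x - 1) ^ 2) (2 * (x - 1)) x := by
      simpa using ((hasDerivAt_id x).sub_const 1).fun_pow 2
    have hlin : HasDerivAt (fun x : ℝ => 2 * x) 2 x := by
      simpa using (hasDerivAt_id x).const_mul 2
    refine ((hasDerivAt_klFun hx.ne').sub (hsq.div hlin (by positivity))).congr_deriv ?_
    field_simp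
    ring
  refine monotoneOn_of_hasDerivWithinAt_nonneg (convex_Ioi 0)
    (fun x hx => (hderiv x hx).continuousAt.continuousWithinAt)
    (fun x hx => (hderiv x (interior_subset hx)).hasDerivWithinAt) fun x hx => ?_
  rw [interior_Ioi, Set.mem_Ioi] at hx
  have hlog := one_sub_inv_le_log_of_pos hx
  have hsq : 0 ≤ (x - 1) ^ 2 / (2 * x ^ 2) := by positivity
  have hid : 1 - x⁻¹ - 1 / 2 + 1 / (2 * x ^ 2) = (x - 1) ^ 2 / (2 * x ^ 2) := by
    field_simp
    ring
  linarith

theorem antitoneOn_klFun_sub_sq_div_two :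
    AntitoneOn (fun x : ℝ => klFun x - (x - 1) ^ 2 / 2) (Set.Ioi 0) := by
  have hderiv : ∀ x : ℝ, 0 < x →
      HasDerivAt (fun x : ℝ => klFun x - (x - 1) ^ 2 / 2) (log x - (x - 1)) x := by
    intro x hx
    have hsq : HasDerivAt (fun x : ℝ => (x - 1) ^ 2) (2 * (x - 1)) x := by
      simpa using ((hasDerivAt_id x).sub_const 1).fun_pow 2
    refine ((hasDerivAt_klFun hx.ne').sub (hsq.div_const 2)).congr_deriv ?_
    ring
  refine antitoneOn_of_hasDerivWithinAt_nonpos (convex_Ioi 0)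
    (fun x hx => (hderiv x hx).continuousAt.continuousWithinAt)
    (fun x hx => (hderiv x (interior_subset hx)).hasDerivWithinAt) fun x hx => ?_
  rw [interior_Ioi] at hx
  linarith [log_le_sub_one_of_pos hx]

theorem sq_sub_one_div_le_klFun {x c : ℝ} (hx : 0 < x) (hxc : x ≤ c) (hc : 1 ≤ c) :
    (x - 1) ^ 2 / (2 * c) ≤ klFun x := by
  rcases le_total x 1 with hx1 | hx1
  · have key := antitoneOn_klFun_sub_sq_div_two hx (Set.mem_Ioi.2 one_pos) hx1
    have : (x - 1) ^ 2 / (2 * c) ≤ (x - 1) ^ 2 / 2 := by gcongr; linarith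
    simp only [klFun_one] at key
    linarith
  · have key := monotoneOn_klFun_sub_sq_div_two_mul_self (Set.mem_Ioi.2 one_pos) hx hx1
    have : (x - 1) ^ 2 / (2 * c) ≤ (x - 1) ^ 2 / (2 * x) := by gcongr
    simp only [klFun_one] at key
    linarith

theorem klFun_le_sq_sub_one_div {x c : ℝ} (hc : 0 < c) (hcx : c ≤ x) (hc1 : c ≤ 1) :
    klFun x ≤ (x - 1) ^ 2 / (2 * c) := by
  have hx : 0 < x := hc.trans_le hcx
  rcases le_total x 1 with hx1 | hx1
  · have key := monotoneOn_klFun_sub_sq_div_two_mul_self hx (Set.mem_Ioi.2 one_pos) hx1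
    have : (x - 1) ^ 2 / (2 * x) ≤ (x - 1) ^ 2 / (2 * c) := by gcongr
    simp only [klFun_one] at key
    linarith
  · have key := antitoneOn_klFun_sub_sq_div_two (Set.mem_Ioi.2 one_pos) hx hx1
    have : (x - 1) ^ 2 / 2 ≤ (x - 1) ^ 2 / (2 * c) := by gcongr; linarith
    simp only [klFun_one] at key
    linarith

end InformationTheory

section JensenShannon

variable {a b : ℝ}

theorem mul_log_two_mul_div_add_add_sub_div_two (hab : 0 < a + b) :
    a * log (2 * a / (a + b)) + (b - a) / 2 = (a + b) / 2 * klFun (2 * a / (a + b)) := by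
  rw [klFun_apply]
  field_simp
  ring

theorem mul_sq_sub_div_add_eq (hab : 0 < a + b) {c : ℝ} (hc : 0 < c) :
    (c + 1) / (8 * c) * ((a - b) ^ 2 / (a + b))
      = (a + b) / 2 * ((2 * a / (a + b) - 1) ^ 2 / (2 * (2 * c / (c + 1)))) := by
  field_simp
  ring

theorem le_mul_log_two_mul_div_add_add_sub_div_two (ha : 0 < a) (hb : 0 < b) {R : ℝ}
    (hR : 1 ≤ R) (habR : a ≤ R * b) :
    (R + 1) / (8 * R) * ((a - b) ^ 2 / (a + b)) ≤ a * log (2 * a / (a + b)) + (b - a) / 2 := by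
  have hab : 0 < a + b := add_pos ha hb
  have hc : 1 ≤ 2 * R / (R + 1) := by rw [le_div_iff₀ (by linarith)]; linarith
  have hac : 2 * a / (a + b) ≤ 2 * R / (R + 1) := by
    rw [div_le_div_iff₀ hab (by linarith)]; nlinarith
  rw [mul_sq_sub_div_add_eq hab (by linarith), mul_log_two_mul_div_add_add_sub_div_two hab]
  gcongr
  exact sq_sub_one_div_le_klFun (by positivity) hac hc

theorem mul_log_two_mul_div_add_add_sub_div_two_le (ha : 0 < a) (hb : 0 < b) {r : ℝ}
    (hr : 0 < r) (hr1 : r ≤ 1) (hrab : r * b ≤ a) :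
    a * log (2 * a / (a + b)) + (b - a) / 2 ≤ (r + 1) / (8 * r) * ((a - b) ^ 2 / (a + b)) := by
  have hab : 0 < a + b := add_pos ha hb
  have hc : 2 * r / (r + 1) ≤ 1 := by rw [div_le_one (by linarith)]; linarith
  have hca : 2 * r / (r + 1) ≤ 2 * a / (a + b) := by
    rw [div_le_div_iff₀ (by linarith) hab]; nlinarith
  rw [mul_sq_sub_div_add_eq hab hr, mul_log_two_mul_div_add_add_sub_div_two hab]
  gcongr
  exact klFun_le_sq_sub_one_div (by positivity) hca hc

end JensenShannon

theorem stmt10 (n : ℕ) (p q : Fin n → ℝ)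
    (hp : ∀ i, 0 < p i) (hq : ∀ i, 0 < q i)
    (hp1 : ∑ i, p i = 1) (hq1 : ∑ i, q i = 1)
    (r R : ℝ) (hr : 0 < r) (hrR : ∀ i, r ≤ p i / q i ∧ p i / q i ≤ R) :
    ((R+1)/(8*R)) * (∑ i, (p i - q i)^2 / (p i + q i)) ≤ (∑ i, p i * Real.log (2 * p i / (p i + q i))) ∧ (∑ i, p i * Real.log (2 * p i / (p i + q i))) ≤ ((r+1)/(8*r)) * (∑ i, (p i - q i)^2 / (p i + q i)) := by
  have hpR : ∀ i, p i ≤ R * q i := fun i => (div_le_iff₀ (hq i)).1 (hrR i).2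
  have hrp : ∀ i, r * q i ≤ p i := fun i => (le_div_iff₀ (hq i)).1 (hrR i).1
  have hR : 1 ≤ R := by
    simpa [hp1, hq1, ← mul_sum] using sum_le_sum fun i (_ : i ∈ univ) => hpR i
  have hr1 : r ≤ 1 := by
    simpa [hp1, hq1, ← mul_sum] using sum_le_sum fun i (_ : i ∈ univ) => hrp i
  have hF : ∑ i, p i * log (2 * p i / (p i + q i))
      = ∑ i, (p i * log (2 * p i / (p i + q i)) + (q i - p i) / 2) := by
    rw [sum_add_distrib, ← sum_div, sum_sub_distrib, hp1, hq1, sub_self, zero_div, add_zero]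
  rw [hF, mul_sum, mul_sum]
  exact ⟨sum_le_sum fun i _ =>
      le_mul_log_two_mul_div_add_add_sub_div_two (hp i) (hq i) hR (hpR i),
    sum_le_sum fun i _ => mul_log_two_mul_div_add_add_sub_div_two_le (hp i) (hq i) hr hr1 (hrp i)⟩
end

section
/- For all P, Q ∈ Γ_n, the relative Jensen-Shannon divergence satisfies 0 ≤ F(P||Q) ≤ (4/27)·J(P||Q), where F(P||Q) = ∑p_i ln(2p_i/(p_i+q_i)) and J(P||Q) = ∑(p_i - q_i)ln(p_i/q_i). -/
open Finset Real

/-!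
Both bounds are proved termwise; since `∑ (pᵢ - qᵢ) = 0`, the term `(pᵢ - qᵢ) / 2` may be inserted
for free. The lower bound is `log t ≥ 1 - 1/t`. The upper bound is homogeneous in `(pᵢ, qᵢ)`, so it
reduces to `jsGap x ≥ 0` with `x = pᵢ / qᵢ`. That function vanishes together with its derivative
at `x = 1`, and its second derivative is `(x + 1) / x² · (4/27 - x / (x + 1)³) ≥ 0`, so it is convex
on `(0, ∞)` with minimum `0` at `1`. This is where the constant `4/27 = max x / (x + 1)³` comes from.
-/

theorem div_add_one_pow_three_le {x : ℝ} (hx : 0 ≤ x) : x / (x + 1) ^ 3 ≤ 4 / 27 := by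
  rw [div_le_iff₀ (by positivity)]
  nlinarith [mul_nonneg (sq_nonneg (2 * x - 1)) (by linarith : 0 ≤ x + 4)]

noncomputable def jsGap (x : ℝ) : ℝ :=
  4 / 27 * ((x - 1) * log x) - x * log (2 * x / (x + 1)) + (x - 1) / 2

noncomputable def jsGapDeriv (x : ℝ) : ℝ :=
  4 / 27 * (log x + 1 - x⁻¹) - log (2 * x / (x + 1)) - (x + 1)⁻¹ + 1 / 2

theorem hasDerivAt_log_two_mul_div_add_one_s11 {x : ℝ} (hx : 0 < x) :
    HasDerivAt (fun y => log (2 * y / (y + 1))) (x⁻¹ - (x + 1)⁻¹) x := by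
  have hx1 : x + 1 ≠ 0 := by positivity
  have h := ((hasDerivAt_id' x).const_mul 2).fun_div ((hasDerivAt_id' x).add_const 1) hx1
  refine (h.log (by positivity)).congr_deriv ?_
  field_simp

theorem hasDerivAt_jsGap {x : ℝ} (hx : 0 < x) : HasDerivAt jsGap (jsGapDeriv x) x := by
  have h := ((((hasDerivAt_id' x).sub_const 1).mul (hasDerivAt_log hx.ne')).const_mul (4 / 27)).sub
    ((hasDerivAt_id' x).mul (hasDerivAt_log_two_mul_div_add_one_s11 hx)) |>.add
    (((hasDerivAt_id' x).sub_const 1).div_const 2)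
  refine h.congr_deriv ?_
  rw [jsGapDeriv]
  field_simp
  ring

theorem hasDerivAt_jsGapDeriv {x : ℝ} (hx : 0 < x) :
    HasDerivAt jsGapDeriv ((x + 1) / x ^ 2 * (4 / 27 - x / (x + 1) ^ 3)) x := by
  have hx1 : x + 1 ≠ 0 := by positivity
  have h := (((((hasDerivAt_log hx.ne').add_const 1).sub (hasDerivAt_inv hx.ne')).const_mul
    (4 / 27)).sub (hasDerivAt_log_two_mul_div_add_one_s11 hx)).sub
    (((hasDerivAt_id' x).add_const 1).inv hx1) |>.add_const (1 / 2)
  refine h.congr_deriv ?_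
  field_simp
  ring

theorem convexOn_jsGap : ConvexOn ℝ (Set.Ioi 0) jsGap := by
  refine convexOn_of_hasDerivWithinAt2_nonneg (f' := jsGapDeriv)
    (f'' := fun x => (x + 1) / x ^ 2 * (4 / 27 - x / (x + 1) ^ 3)) (convex_Ioi 0)
    (fun x hx => (hasDerivAt_jsGap hx).continuousAt.continuousWithinAt) ?_ ?_ ?_
  all_goals simp only [interior_Ioi, Set.mem_Ioi]
  · exact fun x hx => (hasDerivAt_jsGap hx).hasDerivWithinAt
  · exact fun x hx => (hasDerivAt_jsGapDeriv hx).hasDerivWithinAt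
  · exact fun x hx => mul_nonneg (by positivity) (sub_nonneg.2 (div_add_one_pow_three_le hx.le))

theorem jsGap_nonneg {x : ℝ} (hx : 0 < x) : 0 ≤ jsGap x := by
  have hmin : IsMinOn jsGap (Set.Ioi 0) 1 := by
    refine convexOn_jsGap.isMinOn_of_rightDeriv_eq_zero (by simp) ?_
    rw [(hasDerivAt_jsGap one_pos).hasDerivWithinAt.derivWithin (uniqueDiffWithinAt_Ioi 1)]
    norm_num [jsGapDeriv]
  have hone : jsGap 1 = 0 := by norm_num [jsGap]
  exact hone ▸ hmin (Set.mem_Ioi.2 hx)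

theorem mul_log_two_mul_div_add_le {a b : ℝ} (ha : 0 < a) (hb : 0 < b) :
    a * log (2 * a / (a + b)) ≤ (a - b) / 2 + 4 / 27 * ((a - b) * log (a / b)) := by
  have hratio : 2 * (a / b) / (a / b + 1) = 2 * a / (a + b) := by field_simp
  have hscale : b * jsGap (a / b) =
      4 / 27 * ((a - b) * log (a / b)) - a * log (2 * a / (a + b)) + (a - b) / 2 := by
    rw [jsGap, hratio]
    field_simp
  linarith [mul_nonneg hb.le (jsGap_nonneg (div_pos ha hb))]

theorem sub_div_two_le_mul_log_two_mul_div_add {a b : ℝ} (ha : 0 < a) (hb : 0 < b) :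
    (a - b) / 2 ≤ a * log (2 * a / (a + b)) := by
  calc (a - b) / 2 = a * (1 - (2 * a / (a + b))⁻¹) := by
        field_simp
        ring
    _ ≤ a * log (2 * a / (a + b)) :=
        mul_le_mul_of_nonneg_left (one_sub_inv_le_log_of_pos (by positivity)) ha.le

theorem stmt11 (n : ℕ) (p q : Fin n → ℝ)
    (hp : ∀ i, 0 < p i) (hq : ∀ i, 0 < q i)
    (hp1 : ∑ i, p i = 1) (hq1 : ∑ i, q i = 1) :
    0 ≤ ∑ i, p i * Real.log (2 * p i / (p i + q i)) ∧ (∑ i, p i * Real.log (2 * p i / (p i + q i))) ≤ (4/27) * (∑ i, (p i - q i) * Real.log (p i / q i)) := by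
  have hsum : ∑ i, (p i - q i) / 2 = 0 := by
    rw [← sum_div, sum_sub_distrib, hp1, hq1, sub_self, zero_div]
  constructor
  · calc 0 = ∑ i, (p i - q i) / 2 := hsum.symm
      _ ≤ ∑ i, p i * log (2 * p i / (p i + q i)) :=
        sum_le_sum fun i _ => sub_div_two_le_mul_log_two_mul_div_add (hp i) (hq i)
  · calc ∑ i, p i * log (2 * p i / (p i + q i))
        ≤ ∑ i, ((p i - q i) / 2 + 4 / 27 * ((p i - q i) * log (p i / q i))) :=
          sum_le_sum fun i _ => mul_log_two_mul_div_add_le (hp i) (hq i)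
      _ = 4 / 27 * ∑ i, (p i - q i) * log (p i / q i) := by
        rw [sum_add_distrib, hsum, zero_add, mul_sum]
end

section
/- For P, Q ∈ Γ_n with 0 < r ≤ p_i/q_i ≤ R for all i, the relative arithmetic-geometric divergence G(P||Q) = ∑((p_i+q_i)/2)ln((p_i+q_i)/(2p_i)) satisfies (1/(2(R+1)²))·J(P||Q) ≤ G(P||Q) ≤ (1/(2(r+1)²))·J(P||Q), where J(P||Q) = ∑(p_i - q_i)ln(p_i/q_i). -/
/-!
Both divergences are Csiszár sums `∑ qᵢ φ(pᵢ/qᵢ)`, with generators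
`φ_G(x) = (x+1)/2 · log((x+1)/(2x))` and `φ_J(x) = (x-1) log x`, both vanishing at `1`.
Their second derivatives satisfy `φ_G'' = φ_J'' / (2(x+1)²)`, so on `[r, R]` the differences
`φ_G - φ_J / (2(R+1)²)` and `φ_J / (2(r+1)²) - φ_G` are convex. A convex generator vanishing at
`1` lies above its tangent line there, and the linear part sums to `∑ (pᵢ - qᵢ) = 0`, so both
differences give nonnegative sums. The constraint `∑ pᵢ = ∑ qᵢ` also forces `1 ∈ [r, R]`.
-/

open Finset Real Set

lemma ConvexOn.add_deriv_mul_sub_le {S : Set ℝ} {f : ℝ → ℝ} {x y f' : ℝ}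
    (hf : ConvexOn ℝ S f) (hx : x ∈ S) (hy : y ∈ S) (hd : HasDerivAt f f' x) :
    f x + f' * (y - x) ≤ f y := by
  rcases lt_trichotomy x y with hxy | rfl | hyx
  · have := hf.le_slope_of_hasDerivAt hx hy hxy hd
    rw [slope_def_field, le_div_iff₀ (sub_pos.2 hxy)] at this
    linarith
  · simp
  · have := hf.slope_le_of_hasDerivAt hy hx hyx hd
    rw [slope_def_field, div_le_iff₀ (sub_pos.2 hyx)] at this
    linarith

section Divergence

variable {ι : Type*} {s : Finset ι} {p q : ι → ℝ} {S : Set ℝ} {r R : ℝ}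

lemma sum_mul_comp_div_nonneg {φ : ℝ → ℝ} {d : ℝ} (hφ : ConvexOn ℝ S φ) (h1 : 1 ∈ S)
    (hφ1 : φ 1 = 0) (hd : HasDerivAt φ d 1) (hq : ∀ i ∈ s, 0 < q i)
    (hpq : ∀ i ∈ s, p i / q i ∈ S) (hsum : ∑ i ∈ s, p i = ∑ i ∈ s, q i) :
    0 ≤ ∑ i ∈ s, q i * φ (p i / q i) := calc
  0 = ∑ i ∈ s, d * (p i - q i) := by rw [← mul_sum, sum_sub_distrib, hsum, sub_self, mul_zero]
  _ ≤ ∑ i ∈ s, q i * φ (p i / q i) := sum_le_sum fun i hi => by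
    have htangent := hφ.add_deriv_mul_sub_le h1 (hpq i hi) hd
    rw [hφ1, zero_add] at htangent
    calc d * (p i - q i) = q i * (d * (p i / q i - 1)) := by field_simp [(hq i hi).ne']
      _ ≤ q i * φ (p i / q i) := mul_le_mul_of_nonneg_left htangent (hq i hi).le

lemma sum_mul_comp_div_le_of_deriv2_le (hS : Convex ℝ S) {f g f' g' f'' g'' : ℝ → ℝ}
    (hf : ∀ x ∈ S, HasDerivAt f (f' x) x) (hf' : ∀ x ∈ S, HasDerivAt f' (f'' x) x)
    (hg : ∀ x ∈ S, HasDerivAt g (g' x) x) (hg' : ∀ x ∈ S, HasDerivAt g' (g'' x) x)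
    (hle : ∀ x ∈ S, f'' x ≤ g'' x) (h1 : 1 ∈ S) (hfg1 : f 1 = g 1) (hq : ∀ i ∈ s, 0 < q i)
    (hpq : ∀ i ∈ s, p i / q i ∈ S) (hsum : ∑ i ∈ s, p i = ∑ i ∈ s, q i) :
    ∑ i ∈ s, q i * f (p i / q i) ≤ ∑ i ∈ s, q i * g (p i / q i) := by
  have hd x (hx : x ∈ S) : HasDerivAt (fun y => g y - f y) (g' x - f' x) x :=
    (hg x hx).sub (hf x hx)
  have hconvex : ConvexOn ℝ S (fun y => g y - f y) :=
    convexOn_of_hasDerivWithinAt2_nonneg hS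
      (fun x hx => (hd x hx).continuousAt.continuousWithinAt)
      (fun x hx => (hd x (interior_subset hx)).hasDerivWithinAt)
      (fun x hx => ((hg' x (interior_subset hx)).sub (hf' x (interior_subset hx))).hasDerivWithinAt)
      (fun x hx => sub_nonneg.2 (hle x (interior_subset hx)))
  have := sum_mul_comp_div_nonneg hconvex h1 (sub_eq_zero.2 hfg1.symm) (hd 1 h1) hq hpq hsum
  simpa only [mul_sub, sum_sub_distrib, sub_nonneg] using this

lemma one_mem_Icc_of_sum_eq (hs : s.Nonempty) (hq : ∀ i ∈ s, 0 < q i)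
    (hpq : ∀ i ∈ s, p i / q i ∈ Icc r R) (hsum : ∑ i ∈ s, p i = ∑ i ∈ s, q i) :
    (1 : ℝ) ∈ Icc r R := by
  obtain ⟨i, hi, hpqi⟩ := exists_le_of_sum_le hs hsum.le
  obtain ⟨j, hj, hqpj⟩ := exists_le_of_sum_le hs hsum.ge
  exact ⟨(hpq i hi).1.trans ((div_le_one (hq i hi)).2 hpqi),
    ((one_le_div (hq j hj)).2 hqpj).trans (hpq j hj).2⟩

end Divergence

noncomputable def relArithGeomFun (x : ℝ) : ℝ := (x + 1) / 2 * log ((x + 1) / (2 * x))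

noncomputable def jeffreysFun (x : ℝ) : ℝ := (x - 1) * log x

lemma hasDerivAt_add_one_div_two_mul {x : ℝ} (hx : 0 < x) :
    HasDerivAt (fun y => (y + 1) / (2 * y)) (-1 / (2 * x ^ 2)) x :=
  (((hasDerivAt_id x).add_const 1).div ((hasDerivAt_id x).const_mul 2) (by positivity)).congr_deriv
    (by simp only [id]; field_simp; ring)

lemma hasDerivAt_relArithGeomFun {x : ℝ} (hx : 0 < x) :
    HasDerivAt relArithGeomFun (log ((x + 1) / (2 * x)) / 2 - 1 / (2 * x)) x :=
  ((((hasDerivAt_id x).add_const 1).div_const 2).mul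
    ((hasDerivAt_add_one_div_two_mul hx).log (by positivity))).congr_deriv
    (by simp only [id]; field_simp; ring)

lemma hasDerivAt_deriv_relArithGeomFun {x : ℝ} (hx : 0 < x) :
    HasDerivAt (fun y => log ((y + 1) / (2 * y)) / 2 - 1 / (2 * y))
      (1 / (2 * (x + 1) ^ 2) * ((x + 1) / x ^ 2)) x :=
  (((hasDerivAt_add_one_div_two_mul hx).log (by positivity)).div_const 2 |>.sub
    ((hasDerivAt_const x (1:ℝ)).div ((hasDerivAt_id x).const_mul 2) (by positivity))).congr_deriv
    (by simp only [id]; field_simp; ring)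

lemma hasDerivAt_jeffreysFun {x : ℝ} (hx : 0 < x) :
    HasDerivAt jeffreysFun (log x + 1 - 1 / x) x :=
  (((hasDerivAt_id x).sub_const 1).mul (hasDerivAt_log hx.ne')).congr_deriv
    (by simp only [id]; field_simp; ring)

lemma hasDerivAt_deriv_jeffreysFun {x : ℝ} (hx : 0 < x) :
    HasDerivAt (fun y => log y + 1 - 1 / y) ((x + 1) / x ^ 2) x :=
  (((hasDerivAt_log hx.ne').add_const 1).sub
    ((hasDerivAt_const x (1:ℝ)).div (hasDerivAt_id x) hx.ne')).congr_deriv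
    (by simp only [id]; field_simp; ring)

lemma mul_relArithGeomFun_div {p q : ℝ} (hp : 0 < p) (hq : 0 < q) :
    q * relArithGeomFun (p / q) = (p + q) / 2 * log ((p + q) / (2 * p)) := by
  have hpq : (p / q + 1) / (2 * (p / q)) = (p + q) / (2 * p) := by field_simp
  rw [relArithGeomFun, hpq, ← mul_assoc]
  field_simp

lemma mul_jeffreysFun_div {p q : ℝ} (hq : 0 < q) :
    q * jeffreysFun (p / q) = (p - q) * log (p / q) := by
  rw [jeffreysFun, ← mul_assoc]
  field_simp

section Bounds

variable {ι : Type*} {s : Finset ι} {p q : ι → ℝ} {r R : ℝ}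

lemma sum_mul_jeffreysFun_le_sum_mul_relArithGeomFun (hr : 0 < r) (h1 : (1 : ℝ) ∈ Icc r R)
    (hq : ∀ i ∈ s, 0 < q i) (hpq : ∀ i ∈ s, p i / q i ∈ Icc r R)
    (hsum : ∑ i ∈ s, p i = ∑ i ∈ s, q i) :
    ∑ i ∈ s, q i * (1 / (2 * (R + 1) ^ 2) * jeffreysFun (p i / q i))
      ≤ ∑ i ∈ s, q i * relArithGeomFun (p i / q i) :=
  have hpos x (hx : x ∈ Icc r R) : 0 < x := hr.trans_le hx.1
  sum_mul_comp_div_le_of_deriv2_le (convex_Icc r R)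
    (fun x hx => (hasDerivAt_jeffreysFun (hpos x hx)).const_mul _)
    (fun x hx => (hasDerivAt_deriv_jeffreysFun (hpos x hx)).const_mul _)
    (fun x hx => hasDerivAt_relArithGeomFun (hpos x hx))
    (fun x hx => hasDerivAt_deriv_relArithGeomFun (hpos x hx))
    (fun x hx => by have := hpos x hx; gcongr; exact hx.2)
    h1 (by simp [jeffreysFun, relArithGeomFun]) hq hpq hsum

lemma sum_mul_relArithGeomFun_le_sum_mul_jeffreysFun (hr : 0 < r) (h1 : (1 : ℝ) ∈ Icc r R)
    (hq : ∀ i ∈ s, 0 < q i) (hpq : ∀ i ∈ s, p i / q i ∈ Icc r R)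
    (hsum : ∑ i ∈ s, p i = ∑ i ∈ s, q i) :
    ∑ i ∈ s, q i * relArithGeomFun (p i / q i)
      ≤ ∑ i ∈ s, q i * (1 / (2 * (r + 1) ^ 2) * jeffreysFun (p i / q i)) :=
  have hpos x (hx : x ∈ Icc r R) : 0 < x := hr.trans_le hx.1
  sum_mul_comp_div_le_of_deriv2_le (convex_Icc r R)
    (fun x hx => hasDerivAt_relArithGeomFun (hpos x hx))
    (fun x hx => hasDerivAt_deriv_relArithGeomFun (hpos x hx))
    (fun x hx => (hasDerivAt_jeffreysFun (hpos x hx)).const_mul _)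
    (fun x hx => (hasDerivAt_deriv_jeffreysFun (hpos x hx)).const_mul _)
    (fun x hx => by have := hpos x hx; gcongr; exact hx.1)
    h1 (by simp [jeffreysFun, relArithGeomFun]) hq hpq hsum

end Bounds

theorem stmt14 (n : ℕ) (p q : Fin n → ℝ)
    (hp : ∀ i, 0 < p i) (hq : ∀ i, 0 < q i)
    (hp1 : ∑ i, p i = 1) (hq1 : ∑ i, q i = 1)
    (r R : ℝ) (hr : 0 < r) (hrR : ∀ i, r ≤ p i / q i ∧ p i / q i ≤ R) :
    (1/(2*(R+1)^2)) * (∑ i, (p i - q i) * Real.log (p i / q i)) ≤ (∑ i, ((p i + q i)/2) * Real.log ((p i + q i) / (2 * p i))) ∧ (∑ i, ((p i + q i)/2) * Real.log ((p i + q i) / (2 * p i))) ≤ (1/(2*(r+1)^2)) * (∑ i, (p i - q i) * Real.log (p i / q i)) := by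
  have hq' : ∀ i ∈ Finset.univ, 0 < q i := fun i _ => hq i
  have hpq : ∀ i ∈ Finset.univ, p i / q i ∈ Icc r R := fun i _ => hrR i
  have hsum : ∑ i, p i = ∑ i, q i := hp1.trans hq1.symm
  have h1 : (1 : ℝ) ∈ Icc r R :=
    one_mem_Icc_of_sum_eq (nonempty_of_sum_ne_zero (f := p) (by simp [hp1])) hq' hpq hsum
  have hG : ∑ i, q i * relArithGeomFun (p i / q i)
      = ∑ i, (p i + q i) / 2 * log ((p i + q i) / (2 * p i)) :=
    sum_congr rfl fun i _ => mul_relArithGeomFun_div (hp i) (hq i)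
  have hJ (c : ℝ) : ∑ i, q i * (c * jeffreysFun (p i / q i))
      = c * ∑ i, (p i - q i) * log (p i / q i) := by
    rw [mul_sum]
    exact sum_congr rfl fun i _ => by rw [mul_left_comm, mul_jeffreysFun_div (hq i)]
  rw [← hG, ← hJ, ← hJ]
  exact ⟨sum_mul_jeffreysFun_le_sum_mul_relArithGeomFun hr h1 hq' hpq hsum,
    sum_mul_relArithGeomFun_le_sum_mul_jeffreysFun hr h1 hq' hpq hsum⟩
end

section
/- For all P, Q ∈ Γ_n, the Jensen-Shannon divergence satisfies 0 ≤ I(P||Q) ≤ (1/2)D(Q||P), where I(P||Q) = (1/2)∑[p_i ln(2p_i/(p_i+q_i)) + q_i ln(2q_i/(p_i+q_i))] and D(Q||P) = ∑(q_i - p_i)ln((p_i+q_i)/(2p_i)). -/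
open Finset Real

theorem stmt18 (n : ℕ) (p q : Fin n → ℝ)
    (hp : ∀ i, 0 < p i) (hq : ∀ i, 0 < q i)
    (hp1 : ∑ i, p i = 1) (hq1 : ∑ i, q i = 1) :
    0 ≤ ((1:ℝ)/2) * ∑ i, (p i * Real.log (2 * p i / (p i + q i)) + q i * Real.log (2 * q i / (p i + q i))) ∧ (((1:ℝ)/2) * ∑ i, (p i * Real.log (2 * p i / (p i + q i)) + q i * Real.log (2 * q i / (p i + q i)))) ≤ (1/2) * (∑ i, (q i - p i) * Real.log ((p i + q i) / (2 * p i))) := by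
  have key : ∀ i, 0 ≤ p i * Real.log (2 * p i / (p i + q i)) + q i * Real.log (2 * q i / (p i + q i)) ∧
      p i * Real.log (2 * p i / (p i + q i)) + q i * Real.log (2 * q i / (p i + q i)) ≤
        (q i - p i) * Real.log ((p i + q i) / (2 * p i)) := by
    intro i
    have ha := hp i; have hb := hq i
    set a := p i with ha'; set b := q i with hb'
    have hs : 0 < a + b := by linarith
    have hinva : Real.log ((a + b) / (2 * a)) = - Real.log (2 * a / (a + b)) := by
      rw [← Real.log_inv]; congr 1; field_simp
    have hinvb : Real.log ((a + b) / (2 * b)) = - Real.log (2 * b / (a + b)) := by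
      rw [← Real.log_inv]; congr 1; field_simp
    have l1 : (a - b) / 2 ≤ a * Real.log (2 * a / (a + b)) := by
      have h := Real.log_le_sub_one_of_pos (show (0:ℝ) < (a + b) / (2 * a) by positivity)
      rw [hinva] at h
      have h2 : 1 - (a + b) / (2 * a) ≤ Real.log (2 * a / (a + b)) := by linarith
      have h3 : a * (1 - (a + b) / (2 * a)) ≤ a * Real.log (2 * a / (a + b)) :=
        mul_le_mul_of_nonneg_left h2 ha.le
      have h4 : a * (1 - (a + b) / (2 * a)) = (a - b) / 2 := by field_simp; ring
      linarith
    have l2 : (b - a) / 2 ≤ b * Real.log (2 * b / (a + b)) := by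
      have h := Real.log_le_sub_one_of_pos (show (0:ℝ) < (a + b) / (2 * b) by positivity)
      rw [hinvb] at h
      have h2 : 1 - (a + b) / (2 * b) ≤ Real.log (2 * b / (a + b)) := by linarith
      have h3 : b * (1 - (a + b) / (2 * b)) ≤ b * Real.log (2 * b / (a + b)) :=
        mul_le_mul_of_nonneg_left h2 hb.le
      have h4 : b * (1 - (a + b) / (2 * b)) = (b - a) / 2 := by field_simp; ring
      linarith
    constructor
    · linarith
    · -- reduce to b * (log(2a/s) + log(2b/s)) ≤ 0
      have hsum : Real.log (2 * a / (a + b)) + Real.log (2 * b / (a + b)) ≤ 0 := by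
        rw [← Real.log_mul (by positivity) (by positivity)]
        apply Real.log_nonpos (by positivity)
        rw [div_mul_div_comm, div_le_one (by positivity)]
        nlinarith [sq_nonneg (a - b)]
      have hb0 : b * (Real.log (2 * a / (a + b)) + Real.log (2 * b / (a + b))) ≤ 0 :=
        mul_nonpos_of_nonneg_of_nonpos hb.le hsum
      rw [hinva]
      nlinarith [hb0]
  have h1 : 0 ≤ ∑ i, (p i * Real.log (2 * p i / (p i + q i)) + q i * Real.log (2 * q i / (p i + q i))) :=
    Finset.sum_nonneg fun i _ => (key i).1
  have h2 : ∑ i, (p i * Real.log (2 * p i / (p i + q i)) + q i * Real.log (2 * q i / (p i + q i))) ≤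
      ∑ i, (q i - p i) * Real.log ((p i + q i) / (2 * p i)) :=
    Finset.sum_le_sum fun i _ => (key i).2
  constructor
  · linarith
  · linarith
end

section
/- For all P, Q ∈ Γ_n, the relative arithmetic-geometric divergence satisfies 0 ≤ G(P||Q) ≤ (1/2)[χ²(Q||P) - D(Q||P)], where G(P||Q) = ∑((p_i+q_i)/2)ln((p_i+q_i)/(2p_i)), χ²(Q||P) = ∑(q_i - p_i)²/p_i, and D(Q||P) = ∑(q_i - p_i)ln((p_i+q_i)/(2p_i)). -/
/-!
Both bounds are termwise consequences of `log x ≤ x - 1`. Write `m = (p + q) / 2`.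
Applied to `p / m` it gives `m - p ≤ m log (m / p)`, and these lower bounds sum to `0`.
Applied to `m / p` and multiplied by `q ≥ 0` it gives
`q log (m / p) ≤ (q - p)² / (2p) + (q - p) / 2`; since `m = q - (q - p) / 2`, this is the
upper bound for the `i`-th term up to the linear term `(q - p) / 2`, which sums to `0`.
-/

open Finset Real

theorem sub_le_mul_log_div {a b : ℝ} (ha : 0 < a) (hb : 0 < b) : a - b ≤ a * log (a / b) := by
  have h := one_sub_inv_le_log_of_pos (div_pos ha hb)
  rw [inv_div] at h
  calc a - b = a * (1 - b / a) := by field_simp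
    _ ≤ a * log (a / b) := mul_le_mul_of_nonneg_left h ha.le

theorem mean_mul_log_le {p q : ℝ} (hp : 0 < p) (hq : 0 ≤ q) :
    (p + q) / 2 * log ((p + q) / (2 * p)) ≤
      ((q - p) ^ 2 / p - (q - p) * log ((p + q) / (2 * p)) + (q - p)) / 2 := by
  have hlog : log ((p + q) / (2 * p)) ≤ (q - p) / (2 * p) := by
    calc log ((p + q) / (2 * p)) ≤ (p + q) / (2 * p) - 1 :=
          log_le_sub_one_of_pos (div_pos (by linarith) (by linarith))
      _ = (q - p) / (2 * p) := by field_simp; ring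
  have hq_mul : q * log ((p + q) / (2 * p)) ≤ q * ((q - p) / (2 * p)) :=
    mul_le_mul_of_nonneg_left hlog hq
  have hq_expand : q * ((q - p) / (2 * p)) = ((q - p) ^ 2 / p + (q - p)) / 2 := by
    field_simp; ring
  linarith

theorem stmt19 (n : ℕ) (p q : Fin n → ℝ)
    (hp : ∀ i, 0 < p i) (hq : ∀ i, 0 < q i)
    (hp1 : ∑ i, p i = 1) (hq1 : ∑ i, q i = 1) :
    0 ≤ ∑ i, ((p i + q i)/2) * Real.log ((p i + q i) / (2 * p i)) ∧ (∑ i, ((p i + q i)/2) * Real.log ((p i + q i) / (2 * p i))) ≤ (1/2) * ((∑ i, (q i - p i)^2 / p i) - (∑ i, (q i - p i) * Real.log ((p i + q i) / (2 * p i)))) := by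
  have hsum : ∑ i, (q i - p i) = 0 := by rw [sum_sub_distrib, hp1, hq1, sub_self]
  constructor
  · calc (0 : ℝ) = (∑ i, (q i - p i)) / 2 := by rw [hsum, zero_div]
      _ = ∑ i, ((p i + q i) / 2 - p i) := by rw [sum_div]; congr 1; ext i; ring
      _ ≤ _ := sum_le_sum fun i _ => by
        have hm : 0 < (p i + q i) / 2 := by linarith [hp i, hq i]
        simpa only [div_div] using sub_le_mul_log_div hm (hp i)
  · calc _ ≤ ∑ i, ((q i - p i) ^ 2 / p i - (q i - p i) * log ((p i + q i) / (2 * p i))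
              + (q i - p i)) / 2 :=
          sum_le_sum fun i _ => mean_mul_log_le (hp i) (hq i).le
      _ = _ := by rw [← sum_div, sum_add_distrib, sum_sub_distrib, hsum]; ring
end
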